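/- arXiv:math/9706214 — 7 statements merged into one kernel-verified Lean document; each statement's English description precedes it below -/
import Mathlib

section
/- Let X be a real Banach space and 0 < α ≤ 1. Let c : X → ℝ be Fréchet differentiable with α-Hölder continuous derivative on X, let d : X → ℝ be a continuous convex function, and set h := c − d. Assume h admits a convex minorant, so that the convex envelope co h is a well-defined real-valued convex function. Then co h is Fréchet differentiable with α-Hölder continuous derivative on X. -/
open scoped BigOperators

/-- The convex envelope of a function `h : X → ℝ`, given by the infimum over all
finite convex combinations. -/
noncomputable def convEnv {X : Type*} [NormedAddCommGroup X] [NormedSpace ℝ X]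
    (h : X → ℝ) (x : X) : ℝ :=
  sInf { r : ℝ | ∃ (m : ℕ) (l : Fin m → ℝ) (z : Fin m → X),
    (∀ i, 0 < l i) ∧ ∑ i, l i = 1 ∧ ∑ i, l i • z i = x ∧ ∑ i, l i * h (z i) = r }

lemma exists_subgradient {X : Type*} [NormedAddCommGroup X] [NormedSpace ℝ X]
    (d : X → ℝ) (hdc : Continuous d) (hconv : ConvexOn ℝ Set.univ d) (z : X) :
    ∃ q : X →L[ℝ] ℝ, ∀ w, d z + q (w - z) ≤ d w := by
  set s : Set (X × ℝ) := {p : X × ℝ | d p.1 < p.2} with hs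
  have hsconv : Convex ℝ s := by
    have := hconv.convex_strict_epigraph
    simpa [Set.mem_univ] using this
  have hsopen : IsOpen s := by
    have hcont : Continuous fun p : X × ℝ => p.2 - d p.1 :=
      continuous_snd.sub (hdc.comp continuous_fst)
    have h := isOpen_lt (continuous_const : Continuous fun _ : X × ℝ => (0:ℝ)) hcont
    convert h using 1
    ext p; simp [hs, sub_pos]
  have hzs : (z, d z) ∉ s := by simp [hs]
  obtain ⟨f, hf⟩ := geometric_hahn_banach_open_point hsconv hsopen hzs
  set c₀ : ℝ := f (0, 1) with hc₀
  have hdecomp : ∀ (w : X) (t : ℝ), f (w, t) = f (w, 0) + t * c₀ := by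
    intro w t
    have hwt : (w, t) = (w, (0:ℝ)) + t • ((0:X), (1:ℝ)) := by
      simp [Prod.ext_iff]
    rw [hwt, map_add, map_smul]
    simp [hc₀, smul_eq_mul]
  have hc₀neg : c₀ < 0 := by
    have h1 : f (z, d z + 1) < f (z, d z) := hf (z, d z + 1) (by simp [hs])
    rw [hdecomp z (d z + 1), hdecomp z (d z)] at h1
    linarith
  have hne : c₀ ≠ 0 := ne_of_lt hc₀neg
  have hkey : ∀ w : X, f (w, 0) + d w * c₀ ≤ f (z, 0) + d z * c₀ := by
    intro w
    have hlim : ∀ δ : ℝ, 0 < δ → f (w, d w + δ) < f (z, d z) := by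
      intro δ hδ
      apply hf
      simp only [hs, Set.mem_setOf_eq]
      linarith
    by_contra hcon
    push_neg at hcon
    set ε : ℝ := f (w,0) + d w * c₀ - (f (z,0) + d z * c₀) with hε
    have hεpos : 0 < ε := by rw [hε]; linarith
    have h2 := hlim (ε / (-c₀)) (div_pos hεpos (by linarith))
    rw [hdecomp w _, hdecomp z _] at h2
    have h3 : ε / -c₀ * c₀ = -ε := by
      rw [div_mul_eq_mul_div, mul_div_assoc, div_neg, div_self hne]
      ring
    have h4 : (d w + ε / (-c₀)) * c₀ = d w * c₀ - ε := by rw [add_mul, h3]; ring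
    linarith [h2, h4]
  set g := f.comp (ContinuousLinearMap.inl ℝ X ℝ) with hg
  have hgapp : ∀ u : X, g u = f (u, 0) := fun u => rfl
  refine ⟨(-c₀)⁻¹ • g, fun w => ?_⟩
  have happ : ((-c₀)⁻¹ • g) (w - z) = (-c₀)⁻¹ * (f (w,0) - f (z,0)) := by
    rw [ContinuousLinearMap.smul_apply, map_sub, hgapp, hgapp, smul_eq_mul]
  rw [happ]
  have h3 : f (w,0) - f (z,0) ≤ (d z - d w) * c₀ := by nlinarith [hkey w]
  have hinvpos : (0:ℝ) < (-c₀)⁻¹ := inv_pos.2 (by linarith)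
  have h5 : (-c₀)⁻¹ * ((d z - d w) * c₀) = d w - d z := by
    rw [mul_comm ((d z - d w)) c₀, ← mul_assoc, inv_neg, neg_mul, inv_mul_cancel₀ hne]
    ring
  have h6 := mul_le_mul_of_nonneg_left h3 (le_of_lt hinvpos)
  linarith [h6, h5 ▸ h6]


lemma taylor_bound {X : Type*} [NormedAddCommGroup X] [NormedSpace ℝ X]
    {c : X → ℝ} (hc : Differentiable ℝ c) {L α : ℝ} (hα0 : 0 < α) (hL : 0 ≤ L)
    (hhold : ∀ x y : X, ‖fderiv ℝ c x - fderiv ℝ c y‖ ≤ L * ‖x - y‖ ^ α) (z v : X) :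
    c (z + v) ≤ c z + fderiv ℝ c z v + L * (‖v‖ ^ α * ‖v‖) := by
  set g : X → ℝ := fun w => c w - fderiv ℝ c z (w - z) with hg
  have hgd : ∀ w, DifferentiableAt ℝ g w := by
    intro w
    exact (hc w).sub (((fderiv ℝ c z).differentiable.comp
      (differentiable_id.sub (differentiable_const z))) w)
  have hgderiv : ∀ w, fderiv ℝ g w = fderiv ℝ c w - fderiv ℝ c z := by
    intro w
    have h1 : HasFDerivAt (fun w => fderiv ℝ c z (w - z)) (fderiv ℝ c z) w := by
      have h0 := ((fderiv ℝ c z).hasFDerivAt (x := w - z)).comp w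
        ((hasFDerivAt_id w).sub_const z)
      simp only [Function.comp_def] at h0
      exact h0
    have h2 : HasFDerivAt g (fderiv ℝ c w - fderiv ℝ c z) w :=
      ((hc w).hasFDerivAt).sub h1
    exact h2.fderiv
  have hball : ∀ w ∈ Metric.closedBall z ‖v‖, ‖fderiv ℝ g w‖ ≤ L * ‖v‖ ^ α := by
    intro w hw
    rw [hgderiv w]
    refine (hhold w z).trans ?_
    have h1 : ‖w - z‖ ≤ ‖v‖ := by
      simpa [dist_eq_norm] using hw
    have h2 : ‖w - z‖ ^ α ≤ ‖v‖ ^ α :=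
      Real.rpow_le_rpow (norm_nonneg _) h1 (le_of_lt hα0)
    exact mul_le_mul_of_nonneg_left h2 hL
  have hmvt := Convex.norm_image_sub_le_of_norm_fderiv_le
    (f := g) (fun w _ => hgd w) hball (convex_closedBall z ‖v‖)
    (Metric.mem_closedBall_self (norm_nonneg v))
    (by simpa [dist_eq_norm] using le_refl ‖v‖ : z + v ∈ Metric.closedBall z ‖v‖)
  have hgzv : g (z + v) = c (z + v) - fderiv ℝ c z v := by simp [hg]
  have hgz : g z = c z := by simp [hg]
  rw [hgzv, hgz] at hmvt
  have : ‖z + v - z‖ = ‖v‖ := by simp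
  rw [this] at hmvt
  have := le_of_abs_le (by simpa [Real.norm_eq_abs] using hmvt)
  linarith [this]


lemma opnorm_le_of_sphere {X : Type*} [NormedAddCommGroup X] [NormedSpace ℝ X]
    (q : X →L[ℝ] ℝ) {r M : ℝ} (hr : 0 < r) (hM : 0 ≤ M)
    (h : ∀ v : X, ‖v‖ = r → |q v| ≤ M) : ‖q‖ ≤ M / r := by
  refine ContinuousLinearMap.opNorm_le_bound q (by positivity) (fun v => ?_)
  rcases eq_or_ne v 0 with rfl | hv
  · simp
  · have hvn : 0 < ‖v‖ := norm_pos_iff.2 hv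
    set v' : X := (r / ‖v‖) • v with hv'
    have hn' : ‖v'‖ = r := by
      rw [hv', norm_smul, Real.norm_eq_abs, abs_of_pos (by positivity)]
      field_simp
    have hq' := h v' hn'
    have hlin : q v' = (r / ‖v‖) * q v := by rw [hv', map_smul, smul_eq_mul]
    rw [hlin, abs_mul, abs_of_pos (by positivity : (0:ℝ) < r / ‖v‖)] at hq'
    have : |q v| ≤ M * ‖v‖ / r := by
      rw [div_mul_eq_mul_div, div_le_iff₀ hvn] at hq'
      rw [le_div_iff₀ hr]
      linarith
    calc ‖q v‖ = |q v| := by rw [Real.norm_eq_abs]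
      _ ≤ M * ‖v‖ / r := this
      _ = M / r * ‖v‖ := by ring

lemma main_reg {X : Type*} [NormedAddCommGroup X] [NormedSpace ℝ X]
    (f : X → ℝ) {L α : ℝ} (hL : 0 < L) (hα0 : 0 < α) (hα1 : α ≤ 1)
    (Hup : ∀ x : X, ∀ ε : ℝ, 0 < ε → ∃ p : X →L[ℝ] ℝ,
      ∀ v, f (x + v) ≤ f x + p v + L * (‖v‖ ^ α * ‖v‖) + ε)
    (Hmid : ∀ x v : X, 2 * f x ≤ f (x + v) + f (x - v)) :
    ∀ x : X, ∃ p : X →L[ℝ] ℝ, HasFDerivAt f p x ∧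
      ∀ v, |f (x + v) - f x - p v| ≤ L * (‖v‖ ^ α * ‖v‖) := by
  -- two-sided approximate estimate
  have claim1 : ∀ x : X, ∀ ε : ℝ, 0 < ε → ∃ p : X →L[ℝ] ℝ,
      ∀ v, |f (x + v) - f x - p v| ≤ L * (‖v‖ ^ α * ‖v‖) + ε := by
    intro x ε hε
    obtain ⟨p, hp⟩ := Hup x ε hε
    refine ⟨p, fun v => abs_le.2 ⟨?_, by linarith [hp v]⟩⟩
    have h1 := hp (-v)
    have h2 := Hmid x v
    have h3 : x + -v = x - v := by abel
    rw [h3] at h1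
    have h4 : p (-v) = - p v := by rw [map_neg]
    rw [h4, norm_neg] at h1
    linarith
  intro x
  -- sequence of approximate derivatives
  set t : ℕ → ℝ := fun n => ((n : ℝ) + 1)⁻¹ with ht
  have htpos : ∀ n, 0 < t n := fun n => by positivity
  set ε : ℕ → ℝ := fun n => t n ^ (1 + α) with hεdef
  have hεpos : ∀ n, 0 < ε n := fun n => Real.rpow_pos_of_pos (htpos n) _
  choose p hp using fun n => claim1 x (ε n) (hεpos n)
  have htmono : ∀ {n m : ℕ}, n ≤ m → t m ≤ t n := by
    intro n m hnm
    apply inv_anti₀ (by positivity)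
    have : (n : ℝ) ≤ m := Nat.cast_le.2 hnm
    linarith
  have hεmono : ∀ {n m : ℕ}, n ≤ m → ε m ≤ ε n := by
    intro n m hnm
    exact Real.rpow_le_rpow (le_of_lt (htpos m)) (htmono hnm) (by linarith)
  have htpow : ∀ n, t n ^ (1 + α) = t n * t n ^ α := by
    intro n
    rw [Real.rpow_add (htpos n), Real.rpow_one]
  -- Cauchy
  set b : ℕ → ℝ := fun N => (2 * L + 2) * t N ^ α with hb
  have hcauchy : CauchySeq p := by
    apply cauchySeq_of_le_tendsto_0 b
    · intro n m N hn hm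
      rw [dist_eq_norm]
      have hbound : ∀ v : X, ‖v‖ = t N → |(p n - p m) v| ≤ (2 * L + 2) * t N ^ α * t N := by
        intro v hv
        have h1 := hp n v
        have h2 := hp m v
        have h3 : (p n - p m) v = (f (x + v) - f x - p m v) - (f (x + v) - f x - p n v) := by
          simp only [ContinuousLinearMap.sub_apply]; ring
        rw [h3]
        have h4 := abs_sub_abs_le_abs_sub (f (x + v) - f x - p m v) (f (x + v) - f x - p n v)
        have h5 := abs_sub (f (x + v) - f x - p m v) (f (x + v) - f x - p n v)
        have h6 : |(f (x + v) - f x - p m v) - (f (x + v) - f x - p n v)|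
            ≤ |f (x + v) - f x - p m v| + |f (x + v) - f x - p n v| := abs_sub _ _
        have h7 : ε n ≤ ε N := hεmono hn
        have h8 : ε m ≤ ε N := hεmono hm
        have h9 : ε N = t N * t N ^ α := by rw [hεdef]; exact htpow N
        rw [hv] at h1 h2
        nlinarith [h1, h2, h6]
      have := opnorm_le_of_sphere (p n - p m) (htpos N)
        (by positivity : (0:ℝ) ≤ (2 * L + 2) * t N ^ α * t N) hbound
      calc ‖p n - p m‖ ≤ (2 * L + 2) * t N ^ α * t N / t N := this
        _ = b N := by rw [mul_div_assoc, div_self (ne_of_gt (htpos N)), mul_one]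
    · -- b → 0
      have h1 : Filter.Tendsto t Filter.atTop (nhds 0) := by
        rw [ht]
        exact tendsto_one_div_add_atTop_nhds_zero_nat.congr (by intro n; rw [one_div])
      have h2 : ContinuousAt (fun s : ℝ => s ^ α) 0 :=
        Real.continuousAt_rpow_const 0 α (Or.inr hα0.le)
      have h3 : Filter.Tendsto (fun N => t N ^ α) Filter.atTop (nhds ((0:ℝ) ^ α)) :=
        (h2.tendsto).comp h1
      rw [Real.zero_rpow (ne_of_gt hα0)] at h3
      have h4 := h3.const_mul (2 * L + 2)
      rw [mul_zero] at h4
      exact h4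
  obtain ⟨q, hq⟩ := cauchySeq_tendsto_of_complete hcauchy
  refine ⟨q, ?_, ?_⟩
  swap
  · -- exact two-sided estimate
    intro v
    have happly : Filter.Tendsto (fun n => p n v) Filter.atTop (nhds (q v)) :=
      ((ContinuousLinearMap.apply ℝ ℝ v).continuous.tendsto q).comp hq
    have ha : Filter.Tendsto (fun n => |f (x + v) - f x - p n v|) Filter.atTop
        (nhds (|f (x + v) - f x - q v|)) := by
      have := (tendsto_const_nhds (x := f (x + v) - f x)).sub happly
      exact (continuous_abs.tendsto _).comp this
    have hbb : Filter.Tendsto (fun n => L * (‖v‖ ^ α * ‖v‖) + ε n) Filter.atTop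
        (nhds (L * (‖v‖ ^ α * ‖v‖) + 0)) := by
      apply Filter.Tendsto.const_add
      -- ε n → 0
      have h1 : Filter.Tendsto t Filter.atTop (nhds 0) := by
        rw [ht]
        exact tendsto_one_div_add_atTop_nhds_zero_nat.congr (by intro n; rw [one_div])
      have h2 : ContinuousAt (fun s : ℝ => s ^ (1 + α)) 0 :=
        Real.continuousAt_rpow_const 0 (1 + α) (Or.inr (by linarith))
      have h3 := (h2.tendsto).comp h1
      rw [Real.zero_rpow (by positivity : (1:ℝ) + α ≠ 0)] at h3
      exact h3
    rw [add_zero] at hbb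
    exact le_of_tendsto_of_tendsto' ha hbb (fun n => hp n v)
  · -- differentiability
    have hest : ∀ v, |f (x + v) - f x - q v| ≤ L * (‖v‖ ^ α * ‖v‖) := by
      intro v
      have happly : Filter.Tendsto (fun n => p n v) Filter.atTop (nhds (q v)) :=
        ((ContinuousLinearMap.apply ℝ ℝ v).continuous.tendsto q).comp hq
      have ha : Filter.Tendsto (fun n => |f (x + v) - f x - p n v|) Filter.atTop
          (nhds (|f (x + v) - f x - q v|)) := by
        have := (tendsto_const_nhds (x := f (x + v) - f x)).sub happly
        exact (continuous_abs.tendsto _).comp this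
      have hbb : Filter.Tendsto (fun n => L * (‖v‖ ^ α * ‖v‖) + ε n) Filter.atTop
          (nhds (L * (‖v‖ ^ α * ‖v‖) + 0)) := by
        apply Filter.Tendsto.const_add
        have h1 : Filter.Tendsto t Filter.atTop (nhds 0) := by
          rw [ht]
          exact tendsto_one_div_add_atTop_nhds_zero_nat.congr (by intro n; rw [one_div])
        have h2 : ContinuousAt (fun s : ℝ => s ^ (1 + α)) 0 :=
          Real.continuousAt_rpow_const 0 (1 + α) (Or.inr (by linarith))
        have h3 := (h2.tendsto).comp h1
        rw [Real.zero_rpow (by positivity : (1:ℝ) + α ≠ 0)] at h3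
        exact h3
      rw [add_zero] at hbb
      exact le_of_tendsto_of_tendsto' ha hbb (fun n => hp n v)
    rw [hasFDerivAt_iff_isLittleO_nhds_zero]
    rw [Asymptotics.isLittleO_iff]
    intro η hη
    have htd : Filter.Tendsto (fun v : X => L * ‖v‖ ^ α) (nhds 0) (nhds 0) := by
      have h1 : Filter.Tendsto (fun v : X => ‖v‖) (nhds 0) (nhds 0) := by
        simpa using continuous_norm.tendsto (0 : X)
      have h2 : ContinuousAt (fun s : ℝ => s ^ α) 0 :=
        Real.continuousAt_rpow_const 0 α (Or.inr hα0.le)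
      have h3 := (h2.tendsto).comp h1
      rw [Real.zero_rpow (ne_of_gt hα0)] at h3
      have h4 := h3.const_mul L
      rw [mul_zero] at h4
      exact h4
    filter_upwards [htd.eventually_lt_const hη] with v hv
    have h1 := hest v
    have h2 : |f (x + v) - f x - q v| ≤ η * ‖v‖ := by
      have h3 : L * (‖v‖ ^ α * ‖v‖) = (L * ‖v‖ ^ α) * ‖v‖ := by ring
      rw [h3] at h1
      exact h1.trans (mul_le_mul_of_nonneg_right (le_of_lt hv) (norm_nonneg v))
    simpa [Real.norm_eq_abs] using h2

lemma holder_of_est {X : Type*} [NormedAddCommGroup X] [NormedSpace ℝ X]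
    (f : X → ℝ) {L α : ℝ} (hL : 0 < L) (hα0 : 0 < α) (hα1 : α ≤ 1)
    (P : X → (X →L[ℝ] ℝ))
    (hP : ∀ x v, |f (x + v) - f x - P x v| ≤ L * (‖v‖ ^ α * ‖v‖)) :
    ∀ x y : X, ‖P x - P y‖ ≤ 6 * L * ‖x - y‖ ^ α := by
  intro x y
  rcases eq_or_ne x y with rfl | hxy
  · simp only [sub_self, norm_zero]
    positivity
  · set r : ℝ := ‖x - y‖ with hr
    have hrpos : 0 < r := by rw [hr]; exact norm_sub_pos_iff.2 hxy
    have hbound : ∀ v : X, ‖v‖ = r → |(P x - P y) v| ≤ 6 * L * (r ^ α * r) := by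
      intro v hv
      have hA := hP x v
      have hB' := hP y (x - y + v)
      have hC := hP y (x - y)
      rw [hv] at hA
      have hyx : y + (x - y + v) = x + v := by abel
      rw [hyx] at hB'
      have hyx2 : y + (x - y) = x := by abel
      rw [hyx2] at hC
      have hadd : P y (x - y + v) = P y (x - y) + P y v := by rw [map_add]
      rw [hadd] at hB'
      -- bound κ(x - y + v)
      have hw : ‖x - y + v‖ ≤ 2 * r := by
        calc ‖x - y + v‖ ≤ ‖x - y‖ + ‖v‖ := norm_add_le _ _
          _ = 2 * r := by rw [← hr, hv]; ring
      have hκw : ‖x - y + v‖ ^ α * ‖x - y + v‖ ≤ 4 * (r ^ α * r) := by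
        have h1 : ‖x - y + v‖ ^ α ≤ (2 * r) ^ α :=
          Real.rpow_le_rpow (norm_nonneg _) hw hα0.le
        have h2 : (2 * r) ^ α = 2 ^ α * r ^ α :=
          Real.mul_rpow (by norm_num) hrpos.le
        have h3 : (2:ℝ) ^ α ≤ 2 := by
          calc (2:ℝ) ^ α ≤ 2 ^ (1:ℝ) :=
            Real.rpow_le_rpow_of_exponent_le one_le_two hα1
            _ = 2 := Real.rpow_one 2
        have h4 : ‖x - y + v‖ ^ α ≤ 2 * r ^ α := by
          rw [h2] at h1
          have := mul_le_mul_of_nonneg_right h3 (Real.rpow_nonneg hrpos.le α)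
          linarith
        have h5 : (0:ℝ) ≤ ‖x - y + v‖ ^ α := Real.rpow_nonneg (norm_nonneg _) α
        nlinarith [norm_nonneg (x - y + v), Real.rpow_nonneg hrpos.le α]
      have hκxy : ‖x - y‖ ^ α * ‖x - y‖ = r ^ α * r := by rw [← hr]
      rw [hκxy] at hC
      have hqv : (P x - P y) v = (f (x + v) - f x - P x v) * (-1)
          + (f (x + v) - f y - (P y (x - y) + P y v))
          - (f x - f y - P y (x - y)) := by
        simp only [ContinuousLinearMap.sub_apply]; ring
      rw [hqv]
      have habs := abs_add_le ((f (x + v) - f x - P x v) * (-1))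
        ((f (x + v) - f y - (P y (x - y) + P y v)))
      have h6 : |(f (x + v) - f x - P x v) * (-1)| = |f (x + v) - f x - P x v| := by
        rw [abs_mul]; simp
      calc |(f (x + v) - f x - P x v) * (-1)
          + (f (x + v) - f y - (P y (x - y) + P y v))
          - (f x - f y - P y (x - y))|
          ≤ |(f (x + v) - f x - P x v) * (-1)
          + (f (x + v) - f y - (P y (x - y) + P y v))|
          + |f x - f y - P y (x - y)| := abs_sub _ _
        _ ≤ |f (x + v) - f x - P x v| + |f (x + v) - f y - (P y (x - y) + P y v)|
          + |f x - f y - P y (x - y)| := by rw [← h6]; linarith [habs]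
        _ ≤ L * (r ^ α * r) + L * (4 * (r ^ α * r)) + L * (r ^ α * r) := by
            have := mul_le_mul_of_nonneg_left hκw hL.le
            linarith [hA, hB', hC, this]
        _ = 6 * L * (r ^ α * r) := by ring
    have := opnorm_le_of_sphere (P x - P y) hrpos (by positivity) hbound
    calc ‖P x - P y‖ ≤ 6 * L * (r ^ α * r) / r := this
      _ = 6 * L * r ^ α := by
          rw [mul_div_assoc, mul_div_assoc, div_self (ne_of_gt hrpos), mul_one]

section
variable {X : Type*} [NormedAddCommGroup X] [NormedSpace ℝ X]

def convSet (h : X → ℝ) (x : X) : Set ℝ :=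
  { r : ℝ | ∃ (m : ℕ) (l : Fin m → ℝ) (z : Fin m → X),
    (∀ i, 0 < l i) ∧ ∑ i, l i = 1 ∧ ∑ i, l i • z i = x ∧ ∑ i, l i * h (z i) = r }

lemma convEnv_eq (h : X → ℝ) (x : X) : convEnv h x = sInf (convSet h x) := rfl

lemma self_mem_convSet (h : X → ℝ) (x : X) : h x ∈ convSet h x := by
  refine ⟨1, fun _ => 1, fun _ => x, fun i => one_pos, ?_, ?_, ?_⟩ <;> simp

lemma convSet_lb {h φ : X → ℝ} (hφ : ConvexOn ℝ Set.univ φ) (hle : ∀ x, φ x ≤ h x)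
    (x : X) {r : ℝ} (hr : r ∈ convSet h x) : φ x ≤ r := by
  obtain ⟨m, l, z, hpos, hsum, hbar, hval⟩ := hr
  have h1 : φ (∑ i, l i • z i) ≤ ∑ i, l i • φ (z i) :=
    hφ.map_sum_le (fun i _ => (hpos i).le) hsum (fun i _ => Set.mem_univ _)
  rw [hbar] at h1
  refine h1.trans ?_
  rw [← hval]
  apply Finset.sum_le_sum
  intro i _
  rw [smul_eq_mul]
  exact mul_le_mul_of_nonneg_left (hle (z i)) (hpos i).le

lemma convSet_bddBelow {h φ : X → ℝ} (hφ : ConvexOn ℝ Set.univ φ) (hle : ∀ x, φ x ≤ h x)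
    (x : X) : BddBelow (convSet h x) :=
  ⟨φ x, fun _ hr => convSet_lb hφ hle x hr⟩

lemma convEnv_le_self {h φ : X → ℝ} (hφ : ConvexOn ℝ Set.univ φ) (hle : ∀ x, φ x ≤ h x)
    (x : X) : convEnv h x ≤ h x :=
  csInf_le (convSet_bddBelow hφ hle x) (self_mem_convSet h x)

lemma convEnv_exists_lt (h : X → ℝ) (x : X) {ε : ℝ} (hε : 0 < ε) :
    ∃ r ∈ convSet h x, r < convEnv h x + ε :=
  Real.lt_sInf_add_pos ⟨h x, self_mem_convSet h x⟩ hε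

end

section
variable {X : Type*} [NormedAddCommGroup X] [NormedSpace ℝ X]

lemma convEnv_midpoint {h φ : X → ℝ} (hφ : ConvexOn ℝ Set.univ φ) (hle : ∀ x, φ x ≤ h x)
    (x v : X) : 2 * convEnv h x ≤ convEnv h (x + v) + convEnv h (x - v) := by
  have key : ∀ ε : ℝ, 0 < ε →
      2 * convEnv h x ≤ convEnv h (x + v) + convEnv h (x - v) + ε := by
    intro ε hε
    obtain ⟨r, ⟨m, l, z, hpos, hsum, hbar, hval⟩, hrlt⟩ :=
      convEnv_exists_lt h (x + v) (half_pos hε)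
    obtain ⟨r', ⟨n, l', z', hpos', hsum', hbar', hval'⟩, hrlt'⟩ :=
      convEnv_exists_lt h (x - v) (half_pos hε)
    set w : Fin (m + n) → ℝ := Fin.append (fun i => l i / 2) (fun j => l' j / 2) with hw
    set zz : Fin (m + n) → X := Fin.append z z' with hzz
    have hwpos : ∀ i, 0 < w i := by
      intro i
      refine Fin.addCases (fun i => ?_) (fun j => ?_) i <;>
        simp [hw, Fin.append_left, Fin.append_right]
      · exact hpos i
      · exact hpos' j
    have hwsum : ∑ i, w i = 1 := by
      rw [hw, Fin.sum_univ_add]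
      simp only [Fin.append_left, Fin.append_right]
      rw [← Finset.sum_div, ← Finset.sum_div, hsum, hsum']
      norm_num
    have hwbar : ∑ i, w i • zz i = x := by
      rw [hw, hzz, Fin.sum_univ_add]
      simp only [Fin.append_left, Fin.append_right]
      have e1 : ∀ i : Fin m, (l i / 2) • z i = (2:ℝ)⁻¹ • (l i • z i) := by
        intro i; rw [div_eq_inv_mul, mul_smul]
      have e2 : ∀ j : Fin n, (l' j / 2) • z' j = (2:ℝ)⁻¹ • (l' j • z' j) := by
        intro j; rw [div_eq_inv_mul, mul_smul]
      rw [Finset.sum_congr rfl (fun i _ => e1 i), Finset.sum_congr rfl (fun j _ => e2 j),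
        ← Finset.smul_sum, ← Finset.smul_sum, hbar, hbar']
      rw [smul_add, smul_sub]
      module
    have hwval : ∑ i, w i * h (zz i) = r / 2 + r' / 2 := by
      rw [hw, hzz, Fin.sum_univ_add]
      simp only [Fin.append_left, Fin.append_right]
      rw [← hval, ← hval', Finset.sum_div, Finset.sum_div]
      congr 1 <;> · apply Finset.sum_congr rfl; intro i _; ring
    have hmem : r / 2 + r' / 2 ∈ convSet h x :=
      ⟨m + n, w, zz, hwpos, hwsum, hwbar, hwval⟩
    have h1 : convEnv h x ≤ r / 2 + r' / 2 :=
      csInf_le (convSet_bddBelow hφ hle x) hmem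
    linarith
  by_contra hcon
  push_neg at hcon
  have := key ((2 * convEnv h x - (convEnv h (x + v) + convEnv h (x - v))) / 2)
    (by linarith)
  linarith

end

section
variable {X : Type*} [NormedAddCommGroup X] [NormedSpace ℝ X]

lemma exists_subgradient' (d : X → ℝ) (hdc : Continuous d) (hconv : ConvexOn ℝ Set.univ d)
    (z : X) : ∃ q : X →L[ℝ] ℝ, ∀ w, d z + q (w - z) ≤ d w :=
  exists_subgradient d hdc hconv z

lemma taylor_bound' {c : X → ℝ} (hc : Differentiable ℝ c) {L α : ℝ} (hα0 : 0 < α) (hL : 0 ≤ L)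
    (hhold : ∀ x y : X, ‖fderiv ℝ c x - fderiv ℝ c y‖ ≤ L * ‖x - y‖ ^ α) (z v : X) :
    c (z + v) ≤ c z + fderiv ℝ c z v + L * (‖v‖ ^ α * ‖v‖) :=
  taylor_bound hc hα0 hL hhold z v

lemma convEnv_upper {c d φ : X → ℝ} {L α : ℝ} (hα0 : 0 < α) (hL : 0 < L)
    (hcdiff : Differentiable ℝ c)
    (hhold : ∀ x y : X, ‖fderiv ℝ c x - fderiv ℝ c y‖ ≤ L * ‖x - y‖ ^ α)
    (hdc : Continuous d) (hdconv : ConvexOn ℝ Set.univ d)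
    (hφ : ConvexOn ℝ Set.univ φ) (hle : ∀ x, φ x ≤ (fun x => c x - d x) x)
    (x : X) {ε : ℝ} (hε : 0 < ε) :
    ∃ p : X →L[ℝ] ℝ, ∀ v,
      convEnv (fun x => c x - d x) (x + v) ≤ convEnv (fun x => c x - d x) x
        + p v + L * (‖v‖ ^ α * ‖v‖) + ε := by
  set h : X → ℝ := fun x => c x - d x with hh
  obtain ⟨r, ⟨m, l, z, hpos, hsum, hbar, hval⟩, hrlt⟩ := convEnv_exists_lt h x hε
  choose q hq using fun i => exists_subgradient' d hdc hdconv (z i)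
  set p : X →L[ℝ] ℝ := ∑ i, l i • (fderiv ℝ c (z i) - q i) with hp
  refine ⟨p, fun v => ?_⟩
  -- pointwise estimate at each z i
  have hpt : ∀ i, h (z i + v) ≤ h (z i) + (fderiv ℝ c (z i) - q i) v
      + L * (‖v‖ ^ α * ‖v‖) := by
    intro i
    have h1 := taylor_bound' hcdiff hα0 hL.le hhold (z i) v
    have h2 := hq i (z i + v)
    have h3 : z i + v - z i = v := by abel
    rw [h3] at h2
    simp only [hh, ContinuousLinearMap.sub_apply]
    linarith
  -- membership of shifted combination
  have hmem : ∑ i, l i * h (z i + v) ∈ convSet h (x + v) := by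
    refine ⟨m, l, fun i => z i + v, hpos, hsum, ?_, rfl⟩
    have : ∑ i, l i • (z i + v) = ∑ i, l i • z i + (∑ i, l i) • v := by
      rw [Finset.sum_smul]
      rw [← Finset.sum_add_distrib]
      apply Finset.sum_congr rfl
      intro i _
      rw [smul_add]
    rw [this, hbar, hsum, one_smul]
  have h4 : convEnv h (x + v) ≤ ∑ i, l i * h (z i + v) :=
    csInf_le (convSet_bddBelow hφ hle (x + v)) hmem
  have h5 : ∑ i, l i * h (z i + v)
      ≤ ∑ i, l i * (h (z i) + (fderiv ℝ c (z i) - q i) v + L * (‖v‖ ^ α * ‖v‖)) := by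
    apply Finset.sum_le_sum
    intro i _
    exact mul_le_mul_of_nonneg_left (hpt i) (hpos i).le
  have h6 : ∑ i, l i * (h (z i) + (fderiv ℝ c (z i) - q i) v + L * (‖v‖ ^ α * ‖v‖))
      = (∑ i, l i * h (z i)) + p v + L * (‖v‖ ^ α * ‖v‖) := by
    rw [hp]
    simp only [ContinuousLinearMap.sum_apply, ContinuousLinearMap.smul_apply, smul_eq_mul]
    have e1 : ∑ i, l i * (h (z i) + (fderiv ℝ c (z i) - q i) v + L * (‖v‖ ^ α * ‖v‖))
        = ∑ i, (l i * h (z i) + l i * ((fderiv ℝ c (z i) - q i) v)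
          + l i * (L * (‖v‖ ^ α * ‖v‖))) := by
      apply Finset.sum_congr rfl; intro i _; ring
    rw [e1, Finset.sum_add_distrib, Finset.sum_add_distrib, ← Finset.sum_mul, hsum, one_mul]
  have h7 : ∑ i, l i * (h (z i) + (fderiv ℝ c (z i) - q i) v + L * (‖v‖ ^ α * ‖v‖))
      ≤ r + p v + L * (‖v‖ ^ α * ‖v‖) := by
    rw [h6, hval]
  linarith
end

/-- Let `c : X → ℝ` be Fréchet differentiable with `α`-Hölder derivative on `X`
(`0 < α ≤ 1`), let `d : X → ℝ` be continuous and convex, and set `h := c - d`.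
If `h` admits a convex minorant, then `co h` is Fréchet differentiable with
`α`-Hölder continuous derivative on `X`. -/
theorem stmt_11 {X : Type*} [NormedAddCommGroup X] [NormedSpace ℝ X] [CompleteSpace X]
    (α : ℝ) (hα0 : 0 < α) (hα1 : α ≤ 1)
    (c d : X → ℝ)
    (hcdiff : Differentiable ℝ c)
    (hchold : ∃ L : ℝ, 0 < L ∧ ∀ x y : X,
      ‖fderiv ℝ c x - fderiv ℝ c y‖ ≤ L * ‖x - y‖ ^ α)
    (hdcont : Continuous d)
    (hdconv : ConvexOn ℝ Set.univ d)
    (hminor : ∃ φ : X → ℝ, ConvexOn ℝ Set.univ φ ∧ ∀ x, φ x ≤ c x - d x) :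
    Differentiable ℝ (convEnv (fun x => c x - d x)) ∧
    ∃ L : ℝ, 0 < L ∧ ∀ x y : X,
      ‖fderiv ℝ (convEnv (fun x => c x - d x)) x -
        fderiv ℝ (convEnv (fun x => c x - d x)) y‖ ≤ L * ‖x - y‖ ^ α := by
  obtain ⟨L, hL, hhold⟩ := hchold
  obtain ⟨φ, hφconv, hφle⟩ := hminor
  have Hup : ∀ x : X, ∀ ε : ℝ, 0 < ε → ∃ p : X →L[ℝ] ℝ,
      ∀ v, convEnv (fun x => c x - d x) (x + v) ≤ convEnv (fun x => c x - d x) x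
        + p v + L * (‖v‖ ^ α * ‖v‖) + ε :=
    fun x ε hε => convEnv_upper hα0 hL hcdiff hhold hdcont hdconv hφconv hφle x hε
  have Hmid : ∀ x v : X, 2 * convEnv (fun x => c x - d x) x
      ≤ convEnv (fun x => c x - d x) (x + v) + convEnv (fun x => c x - d x) (x - v) :=
    fun x v => convEnv_midpoint hφconv hφle x v
  have key := main_reg (convEnv (fun x => c x - d x)) hL hα0 hα1 Hup Hmid
  choose P h1 h2 using key
  constructor
  · exact fun x => (h1 x).differentiableAt
  · refine ⟨6 * L, by positivity, fun x y => ?_⟩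
    rw [(h1 x).fderiv, (h1 y).fderiv]
    exact holder_of_est (convEnv (fun x => c x - d x)) hL hα0 hα1 P (fun x v => h2 x v) x y
end

section
/- Let X be a real Banach space and 0 < α ≤ 1. Let c : X → ℝ be Fréchet differentiable with derivative α-Hölder continuous on every bounded subset of X, let d : X → ℝ be a continuous convex function, and set h := c − d. Assume h is uniformly continuous on bounded subsets of X and strongly coercive, i.e. h(x)/‖x‖ → +∞ as ‖x‖ → ∞. Then the convex envelope co h is Fréchet differentiable with derivative α-Hölder continuous on every bounded subset of X. -/
/-!
The convex envelope `f = co h` is convex and, lying below `h`, bounded above on balls; hence it is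
continuous and has a subgradient everywhere. The heart of the matter is a one-sided second-order
bound `f (x + v) + f (x - v) - 2 f x ≤ K ‖v‖ ^ (1 + α)` on balls. By coercivity (Markov's
inequality), a near-optimal convex combination for `x` carries at least half of its weight on
points of a fixed ball; moving only those points by `± ν⁻¹ • v`, where `ν` is their weight, gives
combinations for `x ± v`. On that ball the second differences of `h = c - d` are at most those of
`c`, since `d` is convex, and those are `O(‖w‖ ^ (1 + α))` by the Hölder bound on `Dc`. Squeezed
between a subgradient and this bound, `f` is differentiable, and comparing the subgradients at two
points gives the Hölder bound for `Df`.
-/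

open scoped BigOperators

open Set Metric Bornology Filter Topology

section Bounded

variable {E β : Type*} [NormedAddCommGroup E] [NormedSpace ℝ E] [PseudoMetricSpace β]

-- Walk from `p` to `x` in `n` steps shorter than the modulus of uniform continuity for `ε = 1`.
theorem Convex.isBounded_image_of_uniformContinuousOn {s : Set E} {f : E → β}
    (hs : Convex ℝ s) (hsb : IsBounded s) (hf : UniformContinuousOn f s) :
    IsBounded (f '' s) := by
  rcases s.eq_empty_or_nonempty with rfl | ⟨p, hp⟩
  · simp
  obtain ⟨δ, hδ, hfδ⟩ := Metric.uniformContinuousOn_iff.1 hf 1 one_pos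
  obtain ⟨D, hD⟩ := (isBounded_iff_subset_closedBall p).1 hsb
  set n : ℕ := ⌈D / δ⌉₊ + 1
  have hn : (0 : ℝ) < n := by positivity
  have hDn : D < n * δ := by
    rw [← div_lt_iff₀ hδ]
    exact (Nat.le_ceil _).trans_lt (by simp [n])
  refine (isBounded_iff_subset_closedBall (f p)).2 ⟨n, ?_⟩
  rintro _ ⟨x, hx, rfl⟩
  set g : ℕ → E := fun k => p + ((k : ℝ) / n) • (x - p)
  have hg : ∀ k ≤ n, g k ∈ s := fun k hk =>
    hs.add_smul_sub_mem hp hx ⟨by positivity, div_le_one_of_le₀ (by exact_mod_cast hk) hn.le⟩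
  have hstep : ∀ k < n, dist (f (g k)) (f (g (k + 1))) ≤ 1 := by
    intro k hk
    refine (hfδ _ (hg k hk.le) _ (hg (k + 1) hk) ?_).le
    have : g k - g (k + 1) = -((1 : ℝ) / n) • (x - p) := by
      simp only [g]; push_cast; module
    rw [dist_eq_norm, this, norm_smul, ← dist_eq_norm, norm_neg, Real.norm_eq_abs,
      abs_of_pos (by positivity), one_div, inv_mul_lt_iff₀ hn]
    exact (mem_closedBall.1 (hD hx)).trans_lt hDn
  have hg0 : g 0 = p := by simp [g]
  have hgn : g n = x := by simp [g, hn.ne']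
  calc dist (f x) (f p) = dist (f (g 0)) (f (g n)) := by rw [hg0, hgn, dist_comm]
    _ ≤ ∑ k ∈ Finset.range n, dist (f (g k)) (f (g (k + 1))) :=
        dist_le_range_sum_dist (fun k => f (g k)) n
    _ ≤ ∑ _k ∈ Finset.range n, (1 : ℝ) :=
        Finset.sum_le_sum fun k hk => hstep k (Finset.mem_range.1 hk)
    _ = n := by simp

end Bounded

section LinearGrowth

variable {X : Type*} [NormedAddCommGroup X] {h : X → ℝ}

theorem exists_norm_sub_le_of_coercive
    (hb : ∀ r, BddBelow (h '' closedBall 0 r)) (hcoer : ∃ R, ∀ x, R ≤ ‖x‖ → 1 ≤ h x / ‖x‖) :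
    ∃ C, ∀ z, ‖z‖ - C ≤ h z := by
  obtain ⟨R, hR⟩ := hcoer
  obtain ⟨m, hm⟩ := hb |R|
  refine ⟨|R| + |m|, fun z => ?_⟩
  rcases le_or_gt ‖z‖ |R| with hz | hz
  · have := hm ⟨z, mem_closedBall_zero_iff.2 hz, rfl⟩
    linarith [neg_abs_le m]
  · have hz0 : 0 < ‖z‖ := (abs_nonneg R).trans_lt hz
    have := (one_le_div hz0).1 (hR z ((le_abs_self R).trans hz.le))
    linarith [abs_nonneg R, abs_nonneg m]

theorem half_le_sum_filter_norm_le {C A : ℝ} (hC : ∀ z, ‖z‖ - C ≤ h z) {n : ℕ}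
    {l : Fin n → ℝ} {z : Fin n → X} (hl : ∀ i, 0 ≤ l i) (hl1 : ∑ i, l i = 1)
    (hA : ∑ i, l i * h (z i) < A) :
    1 / 2 ≤ ∑ i with ‖z i‖ ≤ 2 * (A + C), l i := by
  set ρ := 2 * (A + C)
  have hnorm : ∑ i, l i * ‖z i‖ < ρ / 2 := by
    calc ∑ i, l i * ‖z i‖ ≤ ∑ i, l i * (h (z i) + C) :=
          Finset.sum_le_sum fun i _ => mul_le_mul_of_nonneg_left (by linarith [hC (z i)]) (hl i)
      _ = ∑ i, l i * h (z i) + C := by simp [mul_add, Finset.sum_add_distrib, ← Finset.sum_mul, hl1]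
      _ < ρ / 2 := by simp only [ρ]; linarith
  have hfar : ρ * ∑ i with ¬ ‖z i‖ ≤ ρ, l i ≤ ∑ i, l i * ‖z i‖ := by
    rw [Finset.mul_sum]
    calc ∑ i with ¬ ‖z i‖ ≤ ρ, ρ * l i ≤ ∑ i with ¬ ‖z i‖ ≤ ρ, l i * ‖z i‖ :=
          Finset.sum_le_sum fun i hi => by
            rw [mul_comm]
            exact mul_le_mul_of_nonneg_left (not_le.1 (Finset.mem_filter.1 hi).2).le (hl i)
      _ ≤ ∑ i, l i * ‖z i‖ := Finset.sum_le_sum_of_subset_of_nonneg (Finset.filter_subset _ _)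
          fun i _ _ => mul_nonneg (hl i) (norm_nonneg _)
  have hρ : 0 < ρ := by
    linarith [Finset.sum_nonneg fun i (_ : i ∈ Finset.univ) =>
      mul_nonneg (hl i) (norm_nonneg (z i))]
  have := Finset.sum_filter_add_sum_filter_not Finset.univ (fun i => ‖z i‖ ≤ ρ) l
  nlinarith

end LinearGrowth

section HolderDerivative

variable {X F : Type*} [NormedAddCommGroup X] [NormedSpace ℝ X]
  [NormedAddCommGroup F] [NormedSpace ℝ F]

theorem norm_sub_sub_fderiv_apply_le {c : X → F} {α L ρ : ℝ} (hc : Differentiable ℝ c)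
    (hα : 0 ≤ α) (hL0 : 0 ≤ L)
    (hL : ∀ x y : X, ‖x‖ ≤ ρ → ‖y‖ ≤ ρ → ‖fderiv ℝ c x - fderiv ℝ c y‖ ≤ L * ‖x - y‖ ^ α)
    {z w : X} (hzw : ‖z‖ + ‖w‖ ≤ ρ) :
    ‖c (z + w) - c z - fderiv ℝ c z w‖ ≤ L * ‖w‖ ^ (1 + α) := by
  have hseg : ∀ y ∈ segment ℝ z (z + w), ‖y‖ ≤ ρ ∧ ‖y - z‖ ≤ ‖w‖ := by
    rw [segment_eq_image']
    rintro _ ⟨t, ⟨ht0, ht1⟩, rfl⟩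
    have : ‖t • (z + w - z)‖ ≤ ‖w‖ := by
      rw [add_sub_cancel_left, norm_smul, Real.norm_of_nonneg ht0]
      exact mul_le_of_le_one_left (norm_nonneg w) ht1
    exact ⟨(norm_add_le _ _).trans (by linarith), by rwa [add_sub_cancel_left]⟩
  have hmvt := (convex_segment z (z + w)).norm_image_sub_le_of_norm_hasFDerivWithin_le
    (f := fun y => c y - fderiv ℝ c z y) (f' := fun y => fderiv ℝ c y - fderiv ℝ c z)
    (C := L * ‖w‖ ^ α)
    (fun y _ => ((hc y).hasFDerivAt.sub (fderiv ℝ c z).hasFDerivAt).hasFDerivWithinAt)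
    (fun y hy => (hL y z (hseg y hy).1 (hseg z (left_mem_segment ℝ _ _)).1).trans <| by
      gcongr; exact (hseg y hy).2)
    (left_mem_segment ℝ _ _) (right_mem_segment ℝ _ _)
  rw [add_sub_cancel_left] at hmvt
  calc ‖c (z + w) - c z - fderiv ℝ c z w‖
        = ‖c (z + w) - fderiv ℝ c z (z + w) - (c z - fderiv ℝ c z z)‖ := by
          rw [map_add]; congr 1; abel
    _ ≤ L * ‖w‖ ^ α * ‖w‖ := hmvt
    _ = L * ‖w‖ ^ (1 + α) := by rw [Real.rpow_one_add' (norm_nonneg w) (by linarith)]; ring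

theorem add_add_sub_two_mul_le_of_holder {c : X → ℝ} {α L ρ : ℝ} (hc : Differentiable ℝ c)
    (hα : 0 ≤ α) (hL0 : 0 ≤ L)
    (hL : ∀ x y : X, ‖x‖ ≤ ρ → ‖y‖ ≤ ρ → ‖fderiv ℝ c x - fderiv ℝ c y‖ ≤ L * ‖x - y‖ ^ α)
    {z w : X} (hzw : ‖z‖ + ‖w‖ ≤ ρ) :
    c (z + w) + c (z - w) - 2 * c z ≤ 2 * L * ‖w‖ ^ (1 + α) := by
  have hplus := norm_sub_sub_fderiv_apply_le hc hα hL0 hL hzw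
  have hminus := norm_sub_sub_fderiv_apply_le hc hα hL0 hL (z := z) (w := -w) (by rwa [norm_neg])
  rw [norm_neg, map_neg, ← sub_eq_add_neg, Real.norm_eq_abs] at hminus
  rw [Real.norm_eq_abs] at hplus
  linarith [le_abs_self (c (z + w) - c z - fderiv ℝ c z w),
    le_abs_self (c (z - w) - c z - -fderiv ℝ c z w)]

end HolderDerivative

theorem ConvexOn.two_mul_le_add_add_sub {X : Type*} [AddCommGroup X] [Module ℝ X] {d : X → ℝ}
    (hd : ConvexOn ℝ univ d) (z w : X) : 2 * d z ≤ d (z + w) + d (z - w) := by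
  have := hd.2 (mem_univ (z + w)) (mem_univ (z - w)) (by norm_num : (0 : ℝ) ≤ 1 / 2)
    (by norm_num : (0 : ℝ) ≤ 1 / 2) (by norm_num)
  have hmid : (1 / 2 : ℝ) • (z + w) + (1 / 2 : ℝ) • (z - w) = z := by module
  rw [hmid, smul_eq_mul, smul_eq_mul] at this
  linarith

section ConvexFunction

variable {X : Type*} [NormedAddCommGroup X] [NormedSpace ℝ X] {f : X → ℝ}

theorem ConvexOn.continuous_of_bddAbove (hf : ConvexOn ℝ univ f)
    (hb : ∀ r, ∃ B, ∀ x, ‖x‖ ≤ r → f x ≤ B) : Continuous f := by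
  refine continuousOn_univ.1 <|
    ((hf.continuousOn_tfae isOpen_univ univ_nonempty).out 4 1).1 fun x₀ _ => ?_
  obtain ⟨B, hB⟩ := hb (‖x₀‖ + 1)
  refine isBoundedUnder_of_eventually_le (a := B) ?_
  filter_upwards [closedBall_mem_nhds_of_mem (mem_ball_zero_iff.2 (lt_add_one ‖x₀‖))]
    with y hy using hB y (mem_closedBall_zero_iff.1 hy)

-- A supporting hyperplane at `(x, f x)` of the strict epigraph, which is open by continuity.
theorem ConvexOn.exists_subgradient (hf : ConvexOn ℝ univ f) (hfc : Continuous f) (x : X) :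
    ∃ G : X →L[ℝ] ℝ, ∀ y, f x + G (y - x) ≤ f y := by
  have hconv : Convex ℝ {p : X × ℝ | f p.1 < p.2} := by
    simpa using hf.convex_strict_epigraph
  have hopen : IsOpen {p : X × ℝ | f p.1 < p.2} :=
    isOpen_lt (hfc.comp continuous_fst) continuous_snd
  obtain ⟨φ, hφ⟩ := geometric_hahn_banach_open_point hconv hopen
    (show (x, f x) ∉ {p : X × ℝ | f p.1 < p.2} from lt_irrefl (f x))
  have hsplit : ∀ y t, φ (y, t) = φ (y, 0) + t * φ (0, 1) := fun y t => by
    rw [← smul_eq_mul, ← map_smul, ← map_add]; simp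
  have hβ : φ (0, 1) < 0 := by
    have := hφ (x, f x + 1) (by simp)
    rw [hsplit x, hsplit x (f x)] at this
    linarith
  have hle : ∀ y, φ (y, f y) ≤ φ (x, f x) := fun y => by
    have hcont : Tendsto (fun t => φ (y, t)) (𝓝[>] (f y)) (𝓝 (φ (y, f y))) :=
      ((φ.continuous.comp (Continuous.prodMk_right y)).tendsto (f y)).mono_left
        nhdsWithin_le_nhds
    exact le_of_tendsto hcont (eventually_nhdsWithin_of_forall fun t ht => (hφ (y, t) ht).le)
  refine ⟨(-φ (0, 1))⁻¹ • φ.comp (ContinuousLinearMap.inl ℝ X ℝ), fun y => ?_⟩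
  have hy := hle y
  rw [hsplit y, hsplit x (f x)] at hy
  have hG : φ (y - x, 0) = φ (y, 0) - φ (x, 0) := by
    rw [← map_sub]; simp
  simp only [smul_apply, ContinuousLinearMap.comp_apply,
    ContinuousLinearMap.inl_apply, smul_eq_mul, hG]
  rw [← le_sub_iff_add_le', inv_mul_le_iff₀ (by linarith)]
  nlinarith

theorem hasFDerivAt_of_subgradient_of_le {G : X →L[ℝ] ℝ} {x : X} {K α δ : ℝ} (hα : 0 < α)
    (hδ : 0 < δ) (hG : ∀ y, f x + G (y - x) ≤ f y)
    (hK : ∀ v, ‖v‖ ≤ δ → f (x + v) - f x - G v ≤ K * ‖v‖ ^ (1 + α)) :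
    HasFDerivAt f G x := by
  rw [hasFDerivAt_iff_isLittleO_nhds_zero]
  have hbigO : (fun v => f (x + v) - f x - G v) =O[𝓝 0] fun v => ‖v‖ ^ α * ‖v‖ := by
    refine Asymptotics.IsBigO.of_bound K ?_
    filter_upwards [closedBall_mem_nhds (0 : X) hδ] with v hv
    have hlow := hG (x + v)
    rw [add_sub_cancel_left] at hlow
    rw [Real.norm_of_nonneg (by linarith), norm_mul, Real.norm_of_nonneg (by positivity),
      norm_norm, ← Real.rpow_add_one' (norm_nonneg v) (by linarith), add_comm α]
    exact hK v (mem_closedBall_zero_iff.1 hv)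
  refine hbigO.trans_isLittleO ?_
  have hsmall : (fun v : X => ‖v‖ ^ α) =o[𝓝 0] fun _ => (1 : ℝ) := by
    rw [Asymptotics.isLittleO_one_iff]
    simpa [Real.zero_rpow hα.ne'] using
      (continuous_norm.tendsto (0 : X)).rpow_const (Or.inr hα.le)
  exact Asymptotics.isLittleO_norm_right.1 <| by
    simpa using hsmall.mul_isBigO (Asymptotics.isBigO_refl (fun v : X => ‖v‖) (𝓝 0))

theorem norm_sub_le_of_subgradient {G : X → X →L[ℝ] ℝ} {K α R : ℝ} (hα : 0 ≤ α) (hK0 : 0 ≤ K)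
    (hG : ∀ x y, f x + G x (y - x) ≤ f y)
    (hK : ∀ x v, ‖x‖ ≤ R → ‖v‖ ≤ R → f (x + v) - f x - G x v ≤ K * ‖v‖ ^ (1 + α))
    {x y : X} (hy : ‖y‖ ≤ R) (hxy : 2 * ‖x - y‖ ≤ R) :
    ‖G x - G y‖ ≤ 2 ^ (1 + α) * K * ‖x - y‖ ^ α := by
  obtain rfl | hne := eq_or_ne x y
  · rw [sub_self, norm_zero]
    positivity
  set t := ‖x - y‖
  have ht : 0 < t := norm_pos_iff.2 (sub_ne_zero.2 hne)
  have hone : ∀ u : X, ‖u‖ = 1 → (G x - G y) u ≤ 2 ^ (1 + α) * K * t ^ α := by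
    intro u hu
    have hv : ‖t • u‖ = t := by rw [norm_smul, hu, Real.norm_of_nonneg ht.le, mul_one]
    have hw : ‖x - y + t • u‖ ≤ 2 * t := (norm_add_le _ _).trans (by rw [hv]; linarith)
    have hx := hG x (x + t • u)
    have hyx := hG y x
    have hup := hK y (x - y + t • u) hy (hw.trans hxy)
    rw [add_sub_cancel_left] at hx
    rw [show y + (x - y + t • u) = x + t • u by abel, map_add] at hup
    have hpow : ‖x - y + t • u‖ ^ (1 + α) ≤ 2 ^ (1 + α) * t ^ α * t :=
      calc ‖x - y + t • u‖ ^ (1 + α) ≤ (2 * t) ^ (1 + α) :=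
            Real.rpow_le_rpow (norm_nonneg _) hw (by linarith)
        _ = 2 ^ (1 + α) * t ^ α * t := by
          rw [Real.mul_rpow zero_le_two ht.le, Real.rpow_one_add' ht.le (by linarith)]; ring
    have : t * (G x - G y) u ≤ t * (2 ^ (1 + α) * K * t ^ α) := by
      simp only [sub_apply, map_smul, smul_eq_mul] at hx hup ⊢
      nlinarith [mul_le_mul_of_nonneg_left hpow hK0]
    exact le_of_mul_le_mul_left this ht
  refine ContinuousLinearMap.opNorm_le_of_unit_norm (by positivity) fun u hu => ?_
  rw [Real.norm_eq_abs, abs_le]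
  refine ⟨?_, hone u hu⟩
  have := hone (-u) (by rwa [norm_neg])
  rw [map_neg] at this
  linarith

theorem ConvexOn.differentiable_and_holder_fderiv (hf : ConvexOn ℝ univ f) (hfc : Continuous f)
    {α : ℝ} (hα : 0 < α)
    (h2 : ∀ r : ℝ, 0 < r → ∃ K : ℝ, 0 < K ∧ ∀ x v : X, ‖x‖ ≤ r → ‖v‖ ≤ r →
      f (x + v) + f (x - v) - 2 * f x ≤ K * ‖v‖ ^ (1 + α)) :
    Differentiable ℝ f ∧ ∀ r : ℝ, 0 < r → ∃ L : ℝ, 0 < L ∧ ∀ x y : X, ‖x‖ ≤ r → ‖y‖ ≤ r →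
      ‖fderiv ℝ f x - fderiv ℝ f y‖ ≤ L * ‖x - y‖ ^ α := by
  choose G hG using hf.exists_subgradient hfc
  have hup : ∀ r : ℝ, 0 < r → ∃ K : ℝ, 0 < K ∧ ∀ x v : X, ‖x‖ ≤ r → ‖v‖ ≤ r →
      f (x + v) - f x - G x v ≤ K * ‖v‖ ^ (1 + α) := by
    intro r hr
    obtain ⟨K, hK0, hK⟩ := h2 r hr
    refine ⟨K, hK0, fun x v hx hv => ?_⟩
    have := hG x (x - v)
    rw [sub_sub_cancel_left, map_neg] at this
    linarith [hK x v hx hv]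
  have hder : ∀ x, HasFDerivAt f (G x) x := fun x => by
    obtain ⟨K, -, hK⟩ := hup (‖x‖ + 1) (by positivity)
    exact hasFDerivAt_of_subgradient_of_le hα (by positivity) (hG x)
      fun v hv => hK x v (by linarith) hv
  refine ⟨fun x => (hder x).differentiableAt, fun r hr => ?_⟩
  obtain ⟨K, hK0, hK⟩ := hup (4 * r) (by positivity)
  refine ⟨2 ^ (1 + α) * K, by positivity, fun x y hx hy => ?_⟩
  rw [(hder x).fderiv, (hder y).fderiv]
  exact norm_sub_le_of_subgradient hα.le hK0.le hG hK (by linarith)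
    (by linarith [norm_sub_le x y])

end ConvexFunction

section ConvexEnvelope

variable {X : Type*} [NormedAddCommGroup X] [NormedSpace ℝ X] {h : X → ℝ}

theorem convEnv_le_sum (hh : BddBelow (range h)) {n : ℕ} {l : Fin n → ℝ} (z : Fin n → X)
    (hl : ∀ i, 0 < l i) (hl1 : ∑ i, l i = 1) :
    convEnv h (∑ i, l i • z i) ≤ ∑ i, l i * h (z i) := by
  obtain ⟨m, hm⟩ := hh
  refine csInf_le ⟨m, ?_⟩ ⟨n, l, z, hl, hl1, rfl, rfl⟩
  rintro _ ⟨k, l', z', hl', hl'1, -, rfl⟩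
  calc m = ∑ i, l' i * m := by rw [← Finset.sum_mul, hl'1, one_mul]
    _ ≤ ∑ i, l' i * h (z' i) :=
        Finset.sum_le_sum fun i _ => mul_le_mul_of_nonneg_left (hm ⟨z' i, rfl⟩) (hl' i).le

theorem convEnv_le_self_s12 (hh : BddBelow (range h)) (x : X) : convEnv h x ≤ h x := by
  simpa using convEnv_le_sum hh (n := 1) (l := 1) (fun _ => x) (fun _ => one_pos) (by simp)

theorem exists_sum_lt_convEnv_add (x : X) {ε : ℝ} (hε : 0 < ε) :
    ∃ (n : ℕ) (l : Fin n → ℝ) (z : Fin n → X), (∀ i, 0 < l i) ∧ ∑ i, l i = 1 ∧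
      ∑ i, l i • z i = x ∧ ∑ i, l i * h (z i) < convEnv h x + ε := by
  have hne : ∃ r, r ∈ {r : ℝ | ∃ (m : ℕ) (l : Fin m → ℝ) (z : Fin m → X), (∀ i, 0 < l i) ∧
      ∑ i, l i = 1 ∧ ∑ i, l i • z i = x ∧ ∑ i, l i * h (z i) = r} :=
    ⟨h x, 1, 1, fun _ => x, fun _ => one_pos, by simp, by simp, by simp⟩
  obtain ⟨_, ⟨n, l, z, hl, hl1, hx, rfl⟩, hlt⟩ :=
    exists_lt_of_csInf_lt hne (lt_add_of_pos_right (convEnv h x) hε)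
  exact ⟨n, l, z, hl, hl1, hx, hlt⟩

theorem convEnv_add_le_sum_add_sum (hh : BddBelow (range h)) {m n : ℕ}
    {l : Fin m → ℝ} {l' : Fin n → ℝ} (z : Fin m → X) (z' : Fin n → X)
    (hl : ∀ i, 0 < l i) (hl' : ∀ i, 0 < l' i) (hl1 : ∑ i, l i + ∑ i, l' i = 1) :
    convEnv h (∑ i, l i • z i + ∑ i, l' i • z' i) ≤
      ∑ i, l i * h (z i) + ∑ i, l' i * h (z' i) := by
  have hpos : ∀ i, 0 < Fin.append l l' i :=
    Fin.addCases (fun i => by simpa using hl i) (fun i => by simpa using hl' i)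
  simpa [Fin.sum_univ_add, hl1] using convEnv_le_sum hh (Fin.append z z') hpos
    (by simpa [Fin.sum_univ_add] using hl1)

theorem convexOn_convEnv (hh : BddBelow (range h)) : ConvexOn ℝ univ (convEnv h) := by
  refine ⟨convex_univ, fun x _ y _ a b ha hb hab => ?_⟩
  rcases ha.eq_or_lt with rfl | ha
  · obtain rfl : b = 1 := by simpa using hab
    simp
  rcases hb.eq_or_lt with rfl | hb
  · obtain rfl : a = 1 := by simpa using hab
    simp
  refine le_of_forall_pos_lt_add fun ε hε => ?_
  obtain ⟨m, l, z, hl, hl1, rfl, hlt⟩ := exists_sum_lt_convEnv_add (h := h) x hε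
  obtain ⟨n, l', z', hl', hl'1, rfl, hlt'⟩ := exists_sum_lt_convEnv_add (h := h) y hε
  have hcomb := convEnv_add_le_sum_add_sum hh z z' (l := fun i => a * l i)
    (l' := fun i => b * l' i) (fun i => mul_pos ha (hl i)) (fun i => mul_pos hb (hl' i))
    (by simp [← Finset.mul_sum, hl1, hl'1, hab])
  simp only [smul_eq_mul, Finset.smul_sum, smul_smul, mul_assoc, ← Finset.mul_sum] at hcomb ⊢
  nlinarith

theorem convEnv_add_le_of_shift (hh : BddBelow (range h)) {n : ℕ} {l : Fin n → ℝ}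
    (z : Fin n → X) (hl : ∀ i, 0 < l i) (hl1 : ∑ i, l i = 1) (S : Finset (Fin n))
    (hS : ∑ i ∈ S, l i ≠ 0) (v : X) :
    convEnv h (∑ i, l i • z i + v) ≤
      ∑ i, l i * h (z i) + ∑ i ∈ S, l i * (h (z i + (∑ j ∈ S, l j)⁻¹ • v) - h (z i)) := by
  set w := (∑ j ∈ S, l j)⁻¹ • v
  set z' : Fin n → X := fun i => if i ∈ S then z i + w else z i
  have hz' : ∑ i, l i • z' i = ∑ i, l i • z i + v := by
    have : ∀ i, l i • z' i = l i • z i + if i ∈ S then l i • w else 0 := fun i => by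
      by_cases hi : i ∈ S <;> simp [z', hi, smul_add]
    simp only [this, Finset.sum_add_distrib, Finset.sum_ite_mem_eq, ← Finset.sum_smul, w,
      smul_inv_smul₀ hS]
  have hhz' : ∑ i, l i * h (z' i) = ∑ i, l i * h (z i) +
      ∑ i ∈ S, l i * (h (z i + w) - h (z i)) := by
    have : ∀ i, l i * h (z' i) = l i * h (z i) +
        if i ∈ S then l i * (h (z i + w) - h (z i)) else 0 := fun i => by
      by_cases hi : i ∈ S
      · simp only [z', hi, if_true]; ring
      · simp [z', hi]
    simp only [this, Finset.sum_add_distrib, Finset.sum_ite_mem_eq]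
  rw [← hz', ← hhz']
  exact convEnv_le_sum hh z' hl hl1

theorem convEnv_add_add_convEnv_sub_le {C B M : ℝ} (hC : ∀ z, ‖z‖ - C ≤ h z) {x : X}
    (hx : convEnv h x ≤ B) (v : X)
    (hM : ∀ z w, ‖z‖ ≤ 2 * (B + 1 + C) → ‖w‖ ≤ 2 * ‖v‖ → h (z + w) + h (z - w) - 2 * h z ≤ M) :
    convEnv h (x + v) + convEnv h (x - v) - 2 * convEnv h x ≤ M := by
  have hh : BddBelow (range h) := ⟨-C, by rintro _ ⟨z, rfl⟩; linarith [hC z, norm_nonneg z]⟩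
  refine le_of_forall_pos_le_add fun ε hε => ?_
  obtain ⟨n, l, z, hl, hl1, rfl, hlt⟩ :=
    exists_sum_lt_convEnv_add (h := h) x (ε := min (ε / 2) 1) (by positivity)
  set S := Finset.univ.filter fun i => ‖z i‖ ≤ 2 * (B + 1 + C)
  set ν := ∑ i ∈ S, l i
  have hν : 1 / 2 ≤ ν := half_le_sum_filter_norm_le hC (fun i => (hl i).le) hl1
    (A := B + 1) (by linarith [min_le_right (ε / 2) 1])
  have hν1 : ν ≤ 1 := hl1 ▸ Finset.sum_le_sum_of_subset_of_nonneg (Finset.filter_subset _ _)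
    fun i _ _ => (hl i).le
  obtain ⟨i₀, hi₀⟩ : S.Nonempty := Finset.nonempty_of_sum_ne_zero (by linarith : ν ≠ 0)
  have hM0 : 0 ≤ M := by
    have := hM (z i₀) 0 (Finset.mem_filter.1 hi₀).2 (by simp)
    simp only [add_zero, sub_zero] at this
    linarith
  have hw : ‖ν⁻¹ • v‖ ≤ 2 * ‖v‖ := by
    rw [norm_smul, norm_inv, Real.norm_of_nonneg (by linarith)]
    exact mul_le_mul_of_nonneg_right (inv_le_of_inv_le₀ (by norm_num) (by linarith))
      (norm_nonneg v)
  have hsecond : ∑ i ∈ S, l i * (h (z i + ν⁻¹ • v) - h (z i)) +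
      ∑ i ∈ S, l i * (h (z i + ν⁻¹ • -v) - h (z i)) ≤ ν * M := by
    rw [← Finset.sum_add_distrib, Finset.sum_mul]
    refine Finset.sum_le_sum fun i hi => ?_
    have := hM (z i) (ν⁻¹ • v) (Finset.mem_filter.1 hi).2 hw
    rw [smul_neg, ← sub_eq_add_neg]
    nlinarith [hl i]
  have hplus := convEnv_add_le_of_shift hh z hl hl1 S (by linarith) v
  have hminus := convEnv_add_le_of_shift hh z hl hl1 S (by linarith) (-v)
  rw [← sub_eq_add_neg] at hminus
  nlinarith [min_le_left (ε / 2) 1]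

end ConvexEnvelope

theorem stmt_12_general {X : Type*} [NormedAddCommGroup X] [NormedSpace ℝ X]
    (α : ℝ) (hα0 : 0 < α)
    (c d : X → ℝ)
    (hcdiff : Differentiable ℝ c)
    (hchold : ∀ r : ℝ, 0 < r → ∃ L : ℝ, 0 < L ∧ ∀ x y : X, ‖x‖ ≤ r → ‖y‖ ≤ r →
      ‖fderiv ℝ c x - fderiv ℝ c y‖ ≤ L * ‖x - y‖ ^ α)
    (hdconv : ConvexOn ℝ Set.univ d)
    (hucb : ∀ s : Set X, Bornology.IsBounded s →
      UniformContinuousOn (fun x => c x - d x) s)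
    (hcoer : ∀ M : ℝ, ∃ R : ℝ, ∀ x : X, R ≤ ‖x‖ → M ≤ (c x - d x) / ‖x‖) :
    Differentiable ℝ (convEnv (fun x => c x - d x)) ∧
    ∀ r : ℝ, 0 < r → ∃ L : ℝ, 0 < L ∧ ∀ x y : X, ‖x‖ ≤ r → ‖y‖ ≤ r →
      ‖fderiv ℝ (convEnv (fun x => c x - d x)) x -
        fderiv ℝ (convEnv (fun x => c x - d x)) y‖ ≤ L * ‖x - y‖ ^ α := by
  set h : X → ℝ := fun x => c x - d x
  have hbdd : ∀ r, IsBounded (h '' closedBall 0 r) := fun r =>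
    (convex_closedBall 0 r).isBounded_image_of_uniformContinuousOn isBounded_closedBall
      (hucb _ isBounded_closedBall)
  obtain ⟨C, hC⟩ := exists_norm_sub_le_of_coercive (fun r => (hbdd r).bddBelow) (hcoer 1)
  have hh : BddBelow (range h) := ⟨-C, by rintro _ ⟨z, rfl⟩; linarith [hC z, norm_nonneg z]⟩
  have hfB : ∀ r, ∃ B, ∀ x, ‖x‖ ≤ r → convEnv h x ≤ B := fun r => by
    obtain ⟨B, hB⟩ := (hbdd r).bddAbove
    exact ⟨B, fun x hx => (convEnv_le_self_s12 hh x).trans (hB ⟨x, mem_closedBall_zero_iff.2 hx, rfl⟩)⟩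
  have hf := convexOn_convEnv hh
  refine hf.differentiable_and_holder_fderiv (hf.continuous_of_bddAbove hfB) hα0 fun r hr => ?_
  obtain ⟨B, hB⟩ := hfB r
  obtain ⟨L, hL0, hL⟩ := hchold (2 * |B + 1 + C| + 2 * r) (by positivity)
  refine ⟨2 * L * 2 ^ (1 + α), by positivity, fun x v hx hv => ?_⟩
  refine convEnv_add_add_convEnv_sub_le hC (hB x hx) v fun z w hz hw => ?_
  have hc := add_add_sub_two_mul_le_of_holder hcdiff hα0.le hL0.le hL (z := z) (w := w)
    (by linarith [le_abs_self (B + 1 + C)])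
  have hd := hdconv.two_mul_le_add_add_sub z w
  calc h (z + w) + h (z - w) - 2 * h z ≤ 2 * L * ‖w‖ ^ (1 + α) := by simp only [h]; linarith
    _ ≤ 2 * L * (2 * ‖v‖) ^ (1 + α) := by gcongr
    _ = 2 * L * 2 ^ (1 + α) * ‖v‖ ^ (1 + α) := by
        rw [Real.mul_rpow zero_le_two (norm_nonneg v)]; ring

/-- Let `c : X → ℝ` be Fréchet differentiable with derivative `α`-Hölder continuous on
every bounded subset of `X` (`0 < α ≤ 1`), let `d : X → ℝ` be continuous and convex, and
set `h := c - d`. If `h` is uniformly continuous on bounded sets and strongly coercive,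
then `co h` is Fréchet differentiable with derivative `α`-Hölder continuous on every
bounded subset of `X`. -/
theorem stmt_12 {X : Type*} [NormedAddCommGroup X] [NormedSpace ℝ X] [CompleteSpace X]
    (α : ℝ) (hα0 : 0 < α) (hα1 : α ≤ 1)
    (c d : X → ℝ)
    (hcdiff : Differentiable ℝ c)
    (hchold : ∀ r : ℝ, 0 < r → ∃ L : ℝ, 0 < L ∧ ∀ x y : X, ‖x‖ ≤ r → ‖y‖ ≤ r →
      ‖fderiv ℝ c x - fderiv ℝ c y‖ ≤ L * ‖x - y‖ ^ α)
    (hdcont : Continuous d)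
    (hdconv : ConvexOn ℝ Set.univ d)
    (hucb : ∀ s : Set X, Bornology.IsBounded s →
      UniformContinuousOn (fun x => c x - d x) s)
    (hcoer : ∀ M : ℝ, ∃ R : ℝ, ∀ x : X, R ≤ ‖x‖ → M ≤ (c x - d x) / ‖x‖) :
    Differentiable ℝ (convEnv (fun x => c x - d x)) ∧
    ∀ r : ℝ, 0 < r → ∃ L : ℝ, 0 < L ∧ ∀ x y : X, ‖x‖ ≤ r → ‖y‖ ≤ r →
      ‖fderiv ℝ (convEnv (fun x => c x - d x)) x -
        fderiv ℝ (convEnv (fun x => c x - d x)) y‖ ≤ L * ‖x - y‖ ^ α :=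
  stmt_12_general α hα0 c d hcdiff hchold hdconv hucb hcoer
end

section
/- Let X be a real Banach space and let h : X → ℝ be uniformly continuous on bounded subsets of X and strongly coercive (h(x)/‖x‖ → +∞ as ‖x‖ → ∞). Then for every r > 0 there exists ρ > 0 such that for every x with ‖x‖ ≤ r, (co h)(x) = inf { Σ_{i=1}^m λ_i h(x_i) : m ∈ ℕ, λ_1,…,λ_m > 0, Σ λ_i = 1, Σ λ_i x_i = x, and ‖x_i‖ ≤ ρ for all i }; that is, in computing the convex envelope at points of the ball of radius r one may restrict to convex combinations of points from the ball of radius ρ. -/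
open scoped BigOperators

lemma bdd_on_ball_aux {X : Type*} [NormedAddCommGroup X] [NormedSpace ℝ X]
    (h : X → ℝ) (hucb : ∀ s : Set X, Bornology.IsBounded s → UniformContinuousOn h s)
    (R : ℝ) (hR : 0 ≤ R) : ∃ C : ℝ, 0 ≤ C ∧ ∀ z : X, ‖z‖ ≤ R → |h z| ≤ C := by
  have hb : Bornology.IsBounded (Metric.closedBall (0 : X) R) := Metric.isBounded_closedBall
  have huc := hucb _ hb
  rw [Metric.uniformContinuousOn_iff] at huc
  obtain ⟨δ, hδ, hδ1⟩ := huc 1 one_pos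
  have hδ2 : 0 < δ / 2 := by linarith
  have main : ∀ n : ℕ, ∀ z : X, ‖z‖ ≤ R → ‖z‖ ≤ n * (δ / 2) → |h z - h 0| ≤ n := by
    intro n
    induction n with
    | zero =>
      intro z hz1 hz2
      have : z = 0 := by
        have : ‖z‖ ≤ 0 := by simpa using hz2
        simpa [norm_le_zero_iff] using this
      simp [this]
    | succ n ih =>
      intro z hz1 hz2
      by_cases hsmall : ‖z‖ ≤ n * (δ / 2)
      · have := ih z hz1 hsmall
        push_cast
        linarith
      · push_neg at hsmall
        have hzpos : 0 < ‖z‖ := lt_of_le_of_lt (by positivity) hsmall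
        have hz0 : z ∈ Metric.closedBall (0 : X) R := by
          simpa [Metric.mem_closedBall, dist_eq_norm] using hz1
        have h0mem : (0 : X) ∈ Metric.closedBall (0 : X) R := by
          simpa [Metric.mem_closedBall] using hR
        by_cases h2 : ‖z‖ ≤ δ / 2
        · have hd : dist z 0 < δ := by
            rw [dist_eq_norm, sub_zero]; linarith
          have := hδ1 z hz0 0 h0mem hd
          rw [Real.dist_eq] at this
          push_cast
          linarith
        · push_neg at h2
          set z' : X := (1 - (δ / 2) / ‖z‖) • z with hz'def
          have hcoef0 : 0 ≤ 1 - (δ / 2) / ‖z‖ := by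
            have : (δ / 2) / ‖z‖ ≤ 1 := by
              rw [div_le_one hzpos]; linarith
            linarith
          have hz'norm : ‖z'‖ = ‖z‖ - δ / 2 := by
            rw [hz'def, norm_smul, Real.norm_eq_abs, abs_of_nonneg hcoef0]
            field_simp
          have hz'R : ‖z'‖ ≤ R := by rw [hz'norm]; linarith
          have hz'n : ‖z'‖ ≤ n * (δ / 2) := by
            rw [hz'norm]
            push_cast at hz2
            linarith
          have hz'mem : z' ∈ Metric.closedBall (0 : X) R := by
            simpa [Metric.mem_closedBall, dist_eq_norm] using hz'R
          have hdist : dist z z' < δ := by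
            rw [dist_eq_norm]
            have : z - z' = ((δ / 2) / ‖z‖) • z := by
              rw [hz'def, sub_smul, one_smul]; abel
            rw [this, norm_smul, Real.norm_eq_abs, abs_of_nonneg (by positivity)]
            rw [div_mul_cancel₀ _ (ne_of_gt hzpos)]
            linarith
          have h1 := hδ1 z hz0 z' hz'mem hdist
          rw [Real.dist_eq] at h1
          have h2' := ih z' hz'R hz'n
          push_cast
          calc |h z - h 0| ≤ |h z - h z'| + |h z' - h 0| := abs_sub_le _ _ _
            _ ≤ 1 + n := by linarith
            _ = n + 1 := by ring
  set n : ℕ := ⌈R / (δ / 2)⌉₊ with hn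
  refine ⟨|h 0| + n, by positivity, fun z hz => ?_⟩
  have hzn : ‖z‖ ≤ n * (δ / 2) := by
    have h1 : R / (δ / 2) ≤ n := Nat.le_ceil _
    have : R ≤ n * (δ / 2) := by
      rw [div_le_iff₀ hδ2] at h1
      linarith
    linarith
  have := main n z hz hzn
  calc |h z| = |h 0 + (h z - h 0)| := by ring_nf
    _ ≤ |h 0| + |h z - h 0| := abs_add_le _ _
    _ ≤ |h 0| + n := by linarith

/-- Let `h : X → ℝ` be uniformly continuous on bounded sets and strongly coercive.
Then for every `r > 0` there is `ρ > 0` such that for `‖x‖ ≤ r` the convex envelope of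
`h` at `x` can be computed using only convex combinations of points of norm at most `ρ`. -/
theorem stmt_13 {X : Type*} [NormedAddCommGroup X] [NormedSpace ℝ X] [CompleteSpace X]
    (h : X → ℝ)
    (hucb : ∀ s : Set X, Bornology.IsBounded s → UniformContinuousOn h s)
    (hcoer : ∀ M : ℝ, ∃ R : ℝ, ∀ x : X, R ≤ ‖x‖ → M ≤ h x / ‖x‖) :
    ∀ r : ℝ, 0 < r → ∃ ρ : ℝ, 0 < ρ ∧ ∀ x : X, ‖x‖ ≤ r →
      convEnv h x =
        sInf { t : ℝ | ∃ (m : ℕ) (l : Fin m → ℝ) (z : Fin m → X),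
          (∀ i, 0 < l i) ∧ ∑ i, l i = 1 ∧ ∑ i, l i • z i = x ∧
          (∀ i, ‖z i‖ ≤ ρ) ∧ ∑ i, l i * h (z i) = t } := by
  intro r hr
  -- global lower bound c for h, with c ≤ 0
  obtain ⟨R₀, hR₀⟩ := hcoer 0
  set R₀' : ℝ := max R₀ 1 with hR₀'def
  have hR₀'pos : (0:ℝ) < R₀' := lt_of_lt_of_le one_pos (le_max_right _ _)
  obtain ⟨C₁, hC₁0, hC₁⟩ := bdd_on_ball_aux h hucb R₀' (le_of_lt hR₀'pos)
  set c : ℝ := -C₁ with hcdef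
  have hc0 : c ≤ 0 := by simp [hcdef]; linarith
  have hclow : ∀ z : X, c ≤ h z := by
    intro z
    by_cases hz : ‖z‖ ≤ R₀'
    · have := hC₁ z hz
      have := abs_le.mp this
      linarith [this.1]
    · push_neg at hz
      have hzpos : 0 < ‖z‖ := lt_trans hR₀'pos hz
      have h1 : 0 ≤ h z / ‖z‖ := hR₀ z (le_of_lt (lt_of_le_of_lt (le_max_left _ _) hz))
      have : 0 ≤ h z := by
        have := mul_nonneg h1 (le_of_lt hzpos)
        rwa [div_mul_cancel₀ _ (ne_of_gt hzpos)] at this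
      linarith
  -- upper bound on ball r+1
  have hρ₁pos : (0:ℝ) < r + 1 := by linarith
  obtain ⟨C₂, hC₂0, hC₂⟩ := bdd_on_ball_aux h hucb (r + 1) (le_of_lt hρ₁pos)
  -- slope K and coercivity radius
  set K : ℝ := C₂ - c + 1 with hKdef
  have hKpos : 0 < K := by simp [hKdef]; linarith
  obtain ⟨RK, hRK⟩ := hcoer K
  set ρ : ℝ := max (max r (r + 1)) (max RK 1) with hρdef
  have hρr : r ≤ ρ := le_trans (le_max_left _ _) (le_max_left _ _)
  have hρr1 : r + 1 ≤ ρ := le_trans (le_max_right _ _) (le_max_left _ _)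
  have hρpos : 0 < ρ := lt_of_lt_of_le hr hρr
  have hcoK : ∀ z : X, ρ < ‖z‖ → K * ‖z‖ ≤ h z := by
    intro z hz
    have h1 : 1 ≤ ‖z‖ := le_of_lt (lt_of_le_of_lt (le_trans (le_max_right _ _) (le_max_right _ _)) hz)
    have hzpos : (0:ℝ) < ‖z‖ := lt_of_lt_of_le one_pos h1
    have := hRK z (le_of_lt (lt_of_le_of_lt (le_trans (le_max_left _ _) (le_max_right _ _)) hz))
    rw [le_div_iff₀ hzpos] at this
    linarith
  refine ⟨ρ, hρpos, fun x hx => ?_⟩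
  -- the two sets
  set S : Set ℝ := { t : ℝ | ∃ (m : ℕ) (l : Fin m → ℝ) (z : Fin m → X),
    (∀ i, 0 < l i) ∧ ∑ i, l i = 1 ∧ ∑ i, l i • z i = x ∧ ∑ i, l i * h (z i) = t } with hSdef
  set T : Set ℝ := { t : ℝ | ∃ (m : ℕ) (l : Fin m → ℝ) (z : Fin m → X),
    (∀ i, 0 < l i) ∧ ∑ i, l i = 1 ∧ ∑ i, l i • z i = x ∧
    (∀ i, ‖z i‖ ≤ ρ) ∧ ∑ i, l i * h (z i) = t } with hTdef
  have hTS : T ⊆ S := by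
    rintro t ⟨m, l, z, h1, h2, h3, _, h5⟩
    exact ⟨m, l, z, h1, h2, h3, h5⟩
  have hSlow : ∀ t ∈ S, c ≤ t := by
    rintro t ⟨m, l, z, h1, h2, h3, h5⟩
    have : ∑ i, l i * c ≤ ∑ i, l i * h (z i) :=
      Finset.sum_le_sum fun i _ => mul_le_mul_of_nonneg_left (hclow (z i)) (le_of_lt (h1 i))
    rw [← Finset.sum_mul, h2, one_mul] at this
    linarith [h5 ▸ this]
  have hSbdd : BddBelow S := ⟨c, fun t ht => hSlow t ht⟩
  have hTbdd : BddBelow T := ⟨c, fun t ht => hSlow t (hTS ht)⟩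
  have hTne : T.Nonempty := by
    refine ⟨h x, 1, fun _ => 1, fun _ => x, fun _ => one_pos, ?_, ?_, ?_, ?_⟩
    · simp
    · simp
    · intro i; exact le_trans hx hρr
    · simp
  have hSne : S.Nonempty := ⟨_, hTS hTne.choose_spec⟩
  -- key pointwise replacement lemma
  have key : ∀ z : X, ∃ θ : ℝ, 0 < θ ∧ θ ≤ 1 ∧ ‖x + θ • (z - x)‖ ≤ ρ ∧
      h (x + θ • (z - x)) ≤ θ * h z + (1 - θ) * c := by
    intro z
    by_cases hz : ‖z‖ ≤ ρ
    · refine ⟨1, one_pos, le_refl _, ?_, ?_⟩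
      · have : x + (1:ℝ) • (z - x) = z := by rw [one_smul]; abel
        rw [this]; exact hz
      · have : x + (1:ℝ) • (z - x) = z := by rw [one_smul]; abel
        rw [this]
        have : (1:ℝ) * h z + (1 - 1) * c = h z := by ring
        linarith
    · push_neg at hz
      -- IVT to find θ with ‖x + θ•(z-x)‖ = r + 1
      set g : ℝ → ℝ := fun θ => ‖x + θ • (z - x)‖ with hgdef
      have hgc : ContinuousOn g (Set.Icc 0 1) := by
        apply Continuous.continuousOn
        exact (continuous_const.add ((continuous_id.smul continuous_const))).norm
      have hg0 : g 0 = ‖x‖ := by simp [hgdef]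
      have hg1 : g 1 = ‖z‖ := by
        simp only [hgdef, one_smul]
        congr 1
        abel
      have hmem : (r + 1) ∈ Set.Icc (g 0) (g 1) := by
        constructor
        · rw [hg0]; linarith
        · rw [hg1]; linarith [hρr1]
      have := intermediate_value_Icc (by norm_num : (0:ℝ) ≤ 1) hgc hmem
      obtain ⟨θ, hθmem, hθval⟩ := this
      have hθ1 : θ ≤ 1 := hθmem.2
      have hθpos : 0 < θ := by
        rcases lt_or_eq_of_le hθmem.1 with h' | h'
        · exact h'
        · exfalso
          rw [← h'] at hθval
          rw [hg0] at hθval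
          linarith
      refine ⟨θ, hθpos, hθ1, ?_, ?_⟩
      · rw [show ‖x + θ • (z - x)‖ = g θ from rfl, hθval]; exact hρr1
      · -- h w ≤ C₂, and θ h z + (1-θ) c ≥ K + c = C₂ + 1
        have hwb : h (x + θ • (z - x)) ≤ C₂ := by
          have : ‖x + θ • (z - x)‖ ≤ r + 1 := le_of_eq hθval
          have := hC₂ _ this
          linarith [(abs_le.mp this).2]
        have hKz : K * ‖z‖ ≤ h z := hcoK z hz
        have hθz : 1 ≤ θ * ‖z‖ := by
          have h1 : (r+1) = ‖(1 - θ) • x + θ • z‖ := by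
            rw [← hθval]
            congr 1
            rw [hgdef]
            simp only [sub_smul, one_smul, smul_sub]
            abel
          have h2 : ‖(1 - θ) • x + θ • z‖ ≤ (1 - θ) * ‖x‖ + θ * ‖z‖ := by
            calc ‖(1 - θ) • x + θ • z‖ ≤ ‖(1 - θ) • x‖ + ‖θ • z‖ := norm_add_le _ _
              _ = (1 - θ) * ‖x‖ + θ * ‖z‖ := by
                rw [norm_smul, norm_smul, Real.norm_eq_abs, Real.norm_eq_abs,
                  abs_of_nonneg (by linarith), abs_of_nonneg (le_of_lt hθpos)]
          have h3 : (1 - θ) * ‖x‖ ≤ r := by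
            have : (1 - θ) * ‖x‖ ≤ 1 * ‖x‖ :=
              mul_le_mul_of_nonneg_right (by linarith) (norm_nonneg _)
            rw [one_mul] at this
            linarith
          linarith
        have h4 : K ≤ θ * h z := by
          calc K = K * 1 := by ring
            _ ≤ K * (θ * ‖z‖) := mul_le_mul_of_nonneg_left hθz (le_of_lt hKpos)
            _ = θ * (K * ‖z‖) := by ring
            _ ≤ θ * h z := mul_le_mul_of_nonneg_left hKz (le_of_lt hθpos)
        have h5 : c ≤ (1 - θ) * c := by
          have : (1 - θ) * c ≥ 1 * c := mul_le_mul_of_nonpos_right (by linarith) hc0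
          linarith
        have : K + c = C₂ + 1 := by rw [hKdef]; ring
        linarith
  -- main equality
  show sInf S = sInf T
  apply le_antisymm
  · exact csInf_le_csInf hSbdd hTne hTS
  · apply le_csInf hSne
    rintro t ⟨m, l, z, hlpos, hlsum, hbar, hval⟩
    -- build the compressed combination
    choose θ hθpos hθ1 hwnorm hwval using fun i => key (z i)
    set w : Fin m → X := fun i => x + θ i • (z i - x) with hwdef
    set a : Fin m → ℝ := fun i => l i / θ i with hadef
    have hapos : ∀ i, 0 < a i := fun i => div_pos (hlpos i) (hθpos i)
    have hprod : ∀ i, a i * θ i = l i := fun i => div_mul_cancel₀ _ (ne_of_gt (hθpos i))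
    have hla : ∀ i, l i ≤ a i := by
      intro i
      rw [hadef]
      rw [le_div_iff₀ (hθpos i)]
      calc l i * θ i ≤ l i * 1 := mul_le_mul_of_nonneg_left (hθ1 i) (le_of_lt (hlpos i))
        _ = l i := mul_one _
    set Sa : ℝ := ∑ i, a i with hSadef
    have hSa1 : 1 ≤ Sa := by
      rw [hSadef, ← hlsum]
      exact Finset.sum_le_sum fun i _ => hla i
    have hSapos : 0 < Sa := lt_of_lt_of_le one_pos hSa1
    -- barycenter identity
    have hsmul : ∀ i, a i • w i = l i • z i + (a i - l i) • x := by
      intro i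
      calc a i • (x + θ i • (z i - x)) = a i • x + (a i * θ i) • (z i - x) := by
            rw [smul_add, smul_smul]
        _ = a i • x + l i • (z i - x) := by rw [hprod i]
        _ = l i • z i + (a i - l i) • x := by rw [smul_sub, sub_smul]; abel
    have hbar' : ∑ i, (a i / Sa) • w i = x := by
      have h1 : ∑ i, a i • w i = Sa • x := by
        calc ∑ i, a i • w i = ∑ i, (l i • z i + (a i - l i) • x) :=
              Finset.sum_congr rfl fun i _ => hsmul i
          _ = (∑ i, l i • z i) + ∑ i, (a i - l i) • x := Finset.sum_add_distrib
          _ = x + (∑ i, (a i - l i)) • x := by rw [hbar, Finset.sum_smul]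
          _ = x + (Sa - 1) • x := by rw [Finset.sum_sub_distrib, hlsum, ← hSadef]
          _ = (1 + (Sa - 1)) • x := by rw [add_smul, one_smul]
          _ = Sa • x := by ring_nf
      calc ∑ i, (a i / Sa) • w i = ∑ i, Sa⁻¹ • (a i • w i) := by
            apply Finset.sum_congr rfl
            intro i _
            rw [smul_smul, div_eq_inv_mul]
          _ = Sa⁻¹ • ∑ i, a i • w i := (Finset.smul_sum).symm
          _ = Sa⁻¹ • (Sa • x) := by rw [h1]
          _ = x := by rw [smul_smul, inv_mul_cancel₀ (ne_of_gt hSapos), one_smul]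
    -- value estimate
    have hvals : ∀ i, a i * h (w i) ≤ l i * h (z i) + (a i - l i) * c := by
      intro i
      calc a i * h (w i) ≤ a i * (θ i * h (z i) + (1 - θ i) * c) :=
            mul_le_mul_of_nonneg_left (hwval i) (le_of_lt (hapos i))
        _ = (a i * θ i) * h (z i) + (a i - a i * θ i) * c := by ring
        _ = l i * h (z i) + (a i - l i) * c := by rw [hprod i]
    have hct : c ≤ t := hSlow t ⟨m, l, z, hlpos, hlsum, hbar, hval⟩
    have hvalsum : ∑ i, (a i / Sa) * h (w i) ≤ t := by
      have h1 : ∑ i, a i * h (w i) ≤ t + (Sa - 1) * c := by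
        calc ∑ i, a i * h (w i) ≤ ∑ i, (l i * h (z i) + (a i - l i) * c) :=
              Finset.sum_le_sum fun i _ => hvals i
          _ = (∑ i, l i * h (z i)) + (∑ i, (a i - l i)) * c := by
              rw [Finset.sum_add_distrib, Finset.sum_mul]
          _ = t + (Sa - 1) * c := by rw [hval, Finset.sum_sub_distrib, hlsum, ← hSadef]
      have h2 : ∑ i, (a i / Sa) * h (w i) = (∑ i, a i * h (w i)) / Sa := by
        rw [Finset.sum_div]
        apply Finset.sum_congr rfl
        intro i _
        ring
      rw [h2]
      rw [div_le_iff₀ hSapos]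
      have h3 : (Sa - 1) * c ≤ (Sa - 1) * t :=
        mul_le_mul_of_nonneg_left hct (by linarith)
      calc ∑ i, a i * h (w i) ≤ t + (Sa - 1) * c := h1
        _ ≤ t + (Sa - 1) * t := by linarith
        _ = t * Sa := by ring
    have hmemT : (∑ i, (a i / Sa) * h (w i)) ∈ T := by
      refine ⟨m, fun i => a i / Sa, w, fun i => div_pos (hapos i) hSapos, ?_, hbar', ?_, rfl⟩
      · rw [← Finset.sum_div, ← hSadef, div_self (ne_of_gt hSapos)]
      · exact hwnorm
    exact le_trans (csInf_le hTbdd hmemT) hvalsum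
end

section
/- Let X be a real Banach space, let K : X×X → ℝ be a kernel satisfying conditions (1)–(5) below, and let f : X → ℝ ∪ {+∞} be proper, lower semicontinuous and bounded below. Then for every n ∈ ℕ and every x ∈ X, I_{K,n}(I_{K,n} f)(x) ≤ Δ_{K,n} f(x) ≤ f(x). -/
open scoped BigOperators

/-- The inf-convolution `I_{K,n} f (x) = inf_y ( f(y) + n K(x,y) )` for `f` with values
in `ℝ ∪ {+∞} ⊆ EReal`. -/
noncomputable def infConvK {X : Type*} [NormedAddCommGroup X]
    (K : X → X → ℝ) (f : X → EReal) (n : ℕ) (x : X) : EReal :=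
  ⨅ y, f y + (((n : ℝ) * K x y : ℝ) : EReal)

/-- `Δ_{K,n} f = co( I_{K,n} f + n c_K ) − n c_K`. -/
noncomputable def DeltaK {X : Type*} [NormedAddCommGroup X] [NormedSpace ℝ X]
    (K : X → X → ℝ) (cK : X → ℝ) (f : X → EReal) (n : ℕ) (x : X) : ℝ :=
  convEnv (fun z => (infConvK K f n z).toReal + (n : ℝ) * cK z) x - (n : ℝ) * cK x

/-- Let `K` be a kernel satisfying conditions (1)–(5) (with `K(x,y) = c_K(x) − d_K(x,y)`,
where `d_K(·,y)` is lower semicontinuous and convex), and let `f` be proper, lower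
semicontinuous and bounded below. Then `I_{K,n}(I_{K,n} f) ≤ Δ_{K,n} f ≤ f`. -/
theorem stmt_14 {X : Type*} [NormedAddCommGroup X] [NormedSpace ℝ X] [CompleteSpace X]
    (K : X → X → ℝ) (cK : X → ℝ) (dK : X → X → ℝ)
    (hK1 : (∀ x y : X, 0 ≤ K x y) ∧ ∀ x : X, K x x = 0)
    (hK2 : ∀ x y : X, K x y = K y x)
    (hK3 : ∀ r M : ℝ, 0 < r → 0 < M → ∃ R : ℝ, ∀ x y : X, ‖x‖ ≤ r → R ≤ ‖y‖ → M ≤ K x y)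
    (hK4 : ∀ s : Set (X × X), Bornology.IsBounded s →
      UniformContinuousOn (fun q : X × X => K q.1 q.2) s)
    (hK5 : (∀ x y : X, K x y = cK x - dK x y) ∧
      ∀ y : X, LowerSemicontinuous (fun x => dK x y) ∧
        ConvexOn ℝ Set.univ (fun x => dK x y))
    (f : X → EReal)
    (hproper : ∃ x, f x ≠ ⊤)
    (hlsc : LowerSemicontinuous f)
    (hbdd : ∃ m : ℝ, ∀ x, (m : EReal) ≤ f x)
    (n : ℕ) (hn : 0 < n) (x : X) :
    infConvK K (fun y => infConvK K f n y) n x ≤ (DeltaK K cK f n x : EReal) ∧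
    (DeltaK K cK f n x : EReal) ≤ f x := by
  obtain ⟨hK1a, hK1b⟩ := hK1
  obtain ⟨hK5a, hK5b⟩ := hK5
  obtain ⟨x0, hx0⟩ := hproper
  obtain ⟨m, hm⟩ := hbdd
  set g : X → EReal := fun z => infConvK K f n z with hgdef
  have hKnn : ∀ z y : X, (0 : EReal) ≤ (((n : ℝ) * K z y : ℝ) : EReal) := by
    intro z y
    exact_mod_cast mul_nonneg (Nat.cast_nonneg n) (hK1a z y)
  -- lower bound for g
  have hglb : ∀ z, (m : EReal) ≤ g z := by
    intro z
    refine le_iInf fun y => ?_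
    calc (m : EReal) = m + 0 := by rw [add_zero]
    _ ≤ f y + (((n : ℝ) * K z y : ℝ) : EReal) := add_le_add (hm y) (hKnn z y)
  have hgbot : ∀ z, g z ≠ ⊥ := fun z => ne_bot_of_le_ne_bot (EReal.coe_ne_bot m) (hglb z)
  have hgtop : ∀ z, g z ≠ ⊤ := by
    intro z
    have h1 : g z ≤ f x0 + (((n : ℝ) * K z x0 : ℝ) : EReal) := iInf_le _ x0
    have h2 : f x0 + (((n : ℝ) * K z x0 : ℝ) : EReal) < ⊤ :=
      EReal.add_lt_top hx0 (EReal.coe_ne_top _)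
    exact (h1.trans_lt h2).ne
  have hgcoe : ∀ z, ((g z).toReal : EReal) = g z := fun z => EReal.coe_toReal (hgtop z) (hgbot z)
  -- g ≤ f
  have hgle : ∀ z, g z ≤ f z := by
    intro z
    have : g z ≤ f z + (((n : ℝ) * K z z : ℝ) : EReal) := iInf_le _ z
    simpa [hK1b z] using this
  -- the second inf-convolution
  set A : EReal := infConvK K (fun y => infConvK K f n y) n x with hAdef
  have hAlb : (m : EReal) ≤ A := by
    refine le_iInf fun y => ?_
    calc (m : EReal) = m + 0 := by rw [add_zero]
    _ ≤ g y + (((n : ℝ) * K x y : ℝ) : EReal) := add_le_add (hglb y) (hKnn x y)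
  have hAbot : A ≠ ⊥ := ne_bot_of_le_ne_bot (EReal.coe_ne_bot m) hAlb
  have hAtop : A ≠ ⊤ := by
    have h1 : A ≤ g x + (((n : ℝ) * K x x : ℝ) : EReal) := iInf_le _ x
    have h2 : g x + (((n : ℝ) * K x x : ℝ) : EReal) < ⊤ :=
      EReal.add_lt_top (hgtop x) (EReal.coe_ne_top _)
    exact (h1.trans_lt h2).ne
  set a : ℝ := A.toReal with hadef
  have hAcoe : (a : EReal) = A := EReal.coe_toReal hAtop hAbot
  set h : X → ℝ := fun z => (infConvK K f n z).toReal + (n : ℝ) * cK z with hhdef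
  -- key pointwise inequality
  have hkey : ∀ z : X, a + (n : ℝ) * dK z x ≤ h z := by
    intro z
    have h1 : A ≤ g z + (((n : ℝ) * K x z : ℝ) : EReal) := iInf_le _ z
    rw [← hAcoe, ← hgcoe z, ← EReal.coe_add, EReal.coe_le_coe_iff] at h1
    have hKxz : K x z = cK z - dK z x := by rw [hK2 x z, hK5a z x]
    have : a ≤ (g z).toReal + (n : ℝ) * (cK z - dK z x) := by rwa [hKxz] at h1
    simp only [hhdef]
    nlinarith [this]
  have hdxx : dK x x = cK x := by
    have := hK5a x x
    have := hK1b x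
    linarith
  -- the set defining the convex envelope
  set S : Set ℝ := { r : ℝ | ∃ (m' : ℕ) (l : Fin m' → ℝ) (z : Fin m' → X),
    (∀ i, 0 < l i) ∧ ∑ i, l i = 1 ∧ ∑ i, l i • z i = x ∧ ∑ i, l i * h (z i) = r } with hSdef
  have hmem : h x ∈ S := by
    refine ⟨1, fun _ => 1, fun _ => x, fun i => one_pos, ?_, ?_, ?_⟩ <;> simp
  have hSne : S.Nonempty := ⟨h x, hmem⟩
  have hSlb : ∀ r ∈ S, a + (n : ℝ) * cK x ≤ r := by
    rintro r ⟨m', l, z, hlpos, hlsum, hzsum, hr⟩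
    have hconv := (hK5b x).2
    have hjensen : dK (∑ i, l i • z i) x ≤ ∑ i, l i * dK (z i) x := by
      exact hconv.map_sum_le (fun i _ => (hlpos i).le) (by simpa using hlsum)
        (fun i _ => Set.mem_univ _)
    rw [hzsum] at hjensen
    have hsum : ∑ i, l i * (a + (n : ℝ) * dK (z i) x) ≤ ∑ i, l i * h (z i) :=
      Finset.sum_le_sum fun i _ => mul_le_mul_of_nonneg_left (hkey (z i)) (hlpos i).le
    have hexp : ∑ i, l i * (a + (n : ℝ) * dK (z i) x)
        = a * (∑ i, l i) + (n : ℝ) * ∑ i, l i * dK (z i) x := by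
      rw [Finset.mul_sum, Finset.mul_sum, ← Finset.sum_add_distrib]
      exact Finset.sum_congr rfl fun i _ => by ring
    rw [hexp, hlsum, mul_one] at hsum
    rw [← hr]
    have : (n : ℝ) * dK x x ≤ (n : ℝ) * ∑ i, l i * dK (z i) x :=
      mul_le_mul_of_nonneg_left hjensen (Nat.cast_nonneg n)
    rw [hdxx] at this
    linarith
  have hSbdd : BddBelow S := ⟨a + (n : ℝ) * cK x, hSlb⟩
  have hCE : convEnv h x = sInf S := rfl
  constructor
  · -- first inequality
    have h1 : a + (n : ℝ) * cK x ≤ sInf S := le_csInf hSne hSlb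
    have h2 : a ≤ DeltaK K cK f n x := by
      have : DeltaK K cK f n x = sInf S - (n : ℝ) * cK x := rfl
      rw [this]; linarith
    calc A = (a : EReal) := hAcoe.symm
    _ ≤ (DeltaK K cK f n x : EReal) := EReal.coe_le_coe_iff.mpr h2
  · -- second inequality
    have h1 : sInf S ≤ h x := csInf_le hSbdd hmem
    have h2 : DeltaK K cK f n x ≤ (g x).toReal := by
      have hd : DeltaK K cK f n x = sInf S - (n : ℝ) * cK x := rfl
      have hhx : h x = (g x).toReal + (n : ℝ) * cK x := rfl
      rw [hd]; rw [hhx] at h1; linarith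
    calc (DeltaK K cK f n x : EReal) ≤ ((g x).toReal : EReal) := EReal.coe_le_coe_iff.mpr h2
    _ = g x := hgcoe x
    _ ≤ f x := hgle x
end

section
/- Let X be a real Banach space, let K : X×X → ℝ be a kernel satisfying conditions (1)–(5) below, and let f : X → ℝ ∪ {+∞} be proper, lower semicontinuous and bounded below. If 0 < α ≤ 1 and c_K is Fréchet differentiable with α-Hölder continuous derivative on X, then for every n ∈ ℕ the Δ-convex function Δ_{K,n} f is Fréchet differentiable with α-Hölder continuous derivative on X. -/
open scoped BigOperators

/-!
Put `g = I_{K,n} f + n c_K`. Since `K(·, y) = c_K - d_K(·, y)` with `d_K(·, y)` convex, and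
`c_K` has an `α`-Hölder derivative, each `f y + n K(·, y) + n c_K` has second differences
`h (x + t) + h (x - t) - 2 h x ≤ C ‖t‖ ^ (1 + α)`. This semiconcavity bound passes to the
infimum `g` and, by translating convex combinations, to the convex envelope `u = co g`. As
`c_K = sup_y d_K(·, y)` is convex, `g` has a continuous affine minorant, so the convex function
`u` is bounded above on unit spheres and has a continuous subgradient `ℓ_x` at every point
(Hahn–Banach). The semiconcavity bound then squeezes
`0 ≤ u (x + t) - u x - ℓ_x t ≤ C ‖t‖ ^ (1 + α)`, which makes `u`, and hence
`Δ_{K,n} f = u - n c_K`, differentiable with `α`-Hölder derivative.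
-/

open Filter Set Topology Pointwise

section Semiconcave

variable {X : Type*} [NormedAddCommGroup X]

def SemiconcaveWith (C a : ℝ) (u : X → ℝ) : Prop :=
  ∀ x t, u (x + t) + u (x - t) - 2 * u x ≤ C * ‖t‖ ^ (1 + a)

variable {u v : X → ℝ} {C D a : ℝ}

lemma SemiconcaveWith.add (hu : SemiconcaveWith C a u) (hv : SemiconcaveWith D a v) :
    SemiconcaveWith (C + D) a (u + v) := fun x t => by
  have := hu x t
  have := hv x t
  simp only [Pi.add_apply]
  linarith

lemma SemiconcaveWith.const_mul (hu : SemiconcaveWith C a u) {c : ℝ} (hc : 0 ≤ c) :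
    SemiconcaveWith (c * C) a (fun x => c * u x) := fun x t => by
  have := mul_le_mul_of_nonneg_left (hu x t) hc
  linarith

lemma SemiconcaveWith.const_add (hu : SemiconcaveWith C a u) (c : ℝ) :
    SemiconcaveWith C a (fun x => c + u x) := fun x t => by
  have := hu x t
  linarith

lemma SemiconcaveWith.of_isGLB {ι : Type*} {F : ι → X → ℝ}
    (hF : ∀ i, SemiconcaveWith C a (F i)) (hu : ∀ x, IsGLB (range fun i => F i x) (u x)) :
    SemiconcaveWith C a u := fun x t => by
  have hlb : (u (x + t) + u (x - t) - C * ‖t‖ ^ (1 + a)) / 2 ≤ u x := by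
    refine (hu x).2 ?_
    rintro _ ⟨i, rfl⟩
    have h₁ := (hu (x + t)).1 ⟨i, rfl⟩
    have h₂ := (hu (x - t)).1 ⟨i, rfl⟩
    have := hF i x t
    rw [div_le_iff₀ two_pos]
    linarith
  linarith

variable [NormedSpace ℝ X]

lemma ConcaveOn.semiconcaveWith_zero (hu : ConcaveOn ℝ univ u) : SemiconcaveWith 0 a u :=
  fun x t => by
  have h := hu.2 (mem_univ (x + t)) (mem_univ (x - t)) (by norm_num : (0 : ℝ) ≤ 1 / 2)
    (by norm_num : (0 : ℝ) ≤ 1 / 2) (by norm_num)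
  rw [show (1 / 2 : ℝ) • (x + t) + (1 / 2 : ℝ) • (x - t) = x by module, smul_eq_mul,
    smul_eq_mul] at h
  linarith

lemma semiconcaveWith_of_fderiv_holder (hd : Differentiable ℝ u) {L : ℝ} (hL : 0 ≤ L)
    (ha : 0 ≤ a) (hH : ∀ x y, ‖fderiv ℝ u x - fderiv ℝ u y‖ ≤ L * ‖x - y‖ ^ a) :
    SemiconcaveWith (2 * L) a u := fun x t => by
  have taylor : ∀ w : X, ‖w‖ ≤ ‖t‖ → u (x + w) - u x - fderiv ℝ u x w ≤ L * ‖t‖ ^ a * ‖t‖ := by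
    intro w hw
    have hball : ∀ c ∈ Metric.closedBall x ‖t‖, ‖fderiv ℝ u c - fderiv ℝ u x‖ ≤ L * ‖t‖ ^ a :=
      fun c hc => (hH c x).trans (by gcongr; rwa [← dist_eq_norm])
    have := Convex.norm_image_sub_le_of_norm_fderiv_le' (y := x + w) (fun c _ => hd c) hball
      (convex_closedBall x ‖t‖) (Metric.mem_closedBall_self (norm_nonneg t))
      (by rwa [Metric.mem_closedBall, dist_eq_norm, add_sub_cancel_left])
    rw [add_sub_cancel_left] at this
    exact (le_abs_self _).trans (this.trans (by gcongr))
  have h₁ := taylor t le_rfl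
  have h₂ := taylor (-t) (norm_neg t).le
  rw [map_neg, ← sub_eq_add_neg] at h₂
  rw [Real.rpow_one_add' (norm_nonneg t) (by linarith)]
  linarith

end Semiconcave

section ConvexEnvelope

variable {X : Type*} [NormedAddCommGroup X] [NormedSpace ℝ X]

def convexCombValues (h : X → ℝ) (x : X) : Set ℝ :=
  { r : ℝ | ∃ (m : ℕ) (l : Fin m → ℝ) (z : Fin m → X),
    (∀ i, 0 < l i) ∧ ∑ i, l i = 1 ∧ ∑ i, l i • z i = x ∧ ∑ i, l i * h (z i) = r }

variable {h : X → ℝ} {b : ℝ} {φ : X →L[ℝ] ℝ}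

lemma convEnv_eq_sInf (h : X → ℝ) (x : X) : convEnv h x = sInf (convexCombValues h x) := rfl

lemma self_mem_convexCombValues (h : X → ℝ) (x : X) : h x ∈ convexCombValues h x :=
  ⟨1, fun _ => 1, fun _ => x, fun _ => one_pos, by simp, by simp, by simp⟩

lemma add_le_of_mem_convexCombValues (hlb : ∀ z, b + φ z ≤ h z) {x : X} {r : ℝ}
    (hr : r ∈ convexCombValues h x) : b + φ x ≤ r := by
  obtain ⟨m, l, z, hl, hs, rfl, rfl⟩ := hr
  calc b + φ (∑ i, l i • z i) = ∑ i, l i * (b + φ (z i)) := by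
        simp [mul_add, Finset.sum_add_distrib, ← Finset.sum_mul, hs]
    _ ≤ ∑ i, l i * h (z i) :=
        Finset.sum_le_sum fun i _ => mul_le_mul_of_nonneg_left (hlb (z i)) (hl i).le

lemma bddBelow_convexCombValues (hlb : ∀ z, b + φ z ≤ h z) (x : X) :
    BddBelow (convexCombValues h x) :=
  ⟨b + φ x, fun _ => add_le_of_mem_convexCombValues hlb⟩

lemma convEnv_le_of_mem (hlb : ∀ z, b + φ z ≤ h z) {x : X} {r : ℝ}
    (hr : r ∈ convexCombValues h x) : convEnv h x ≤ r :=
  csInf_le (bddBelow_convexCombValues hlb x) hr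

lemma le_convEnv (hlb : ∀ z, b + φ z ≤ h z) (x : X) : b + φ x ≤ convEnv h x :=
  le_csInf ⟨h x, self_mem_convexCombValues h x⟩ fun _ => add_le_of_mem_convexCombValues hlb

lemma sum_mul_add_mem_convexCombValues {x : X} {m : ℕ} {l : Fin m → ℝ} {z : Fin m → X}
    (hl : ∀ i, 0 < l i) (hs : ∑ i, l i = 1) (hz : ∑ i, l i • z i = x) (t : X) :
    ∑ i, l i * h (z i + t) ∈ convexCombValues h (x + t) :=
  ⟨m, l, fun i => z i + t, hl, hs, by
    simp only [smul_add, Finset.sum_add_distrib, hz, ← Finset.sum_smul, hs, one_smul], rfl⟩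

lemma smul_add_smul_subset_convexCombValues {c d : ℝ} (hc : 0 < c) (hd : 0 < d)
    (hcd : c + d = 1) (x y : X) :
    c • convexCombValues h x + d • convexCombValues h y ⊆ convexCombValues h (c • x + d • y) := by
  rintro _ ⟨_, ⟨r, ⟨m₁, l₁, z₁, hl₁, hs₁, rfl, rfl⟩, rfl⟩, _,
    ⟨s, ⟨m₂, l₂, z₂, hl₂, hs₂, rfl, rfl⟩, rfl⟩, rfl⟩
  refine ⟨m₁ + m₂, Fin.addCases (fun i => c * l₁ i) (fun i => d * l₂ i),
    Fin.addCases z₁ z₂, fun i => Fin.addCases (fun j => by simpa using mul_pos hc (hl₁ j))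
      (fun j => by simpa using mul_pos hd (hl₂ j)) i, ?_, ?_, ?_⟩ <;>
    simp only [Fin.sum_univ_add, Fin.addCases_left, Fin.addCases_right, smul_eq_mul,
      Finset.smul_sum, Finset.mul_sum, mul_smul, mul_assoc]
  rw [← Finset.mul_sum, ← Finset.mul_sum, hs₁, hs₂, mul_one, mul_one, hcd]

lemma convexOn_convEnv_s15 (hlb : ∀ z, b + φ z ≤ h z) : ConvexOn ℝ univ (convEnv h) := by
  refine ⟨convex_univ, fun x _ y _ c d hc hd hcd => ?_⟩
  rcases hc.eq_or_lt with rfl | hc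
  · simp_all
  rcases hd.eq_or_lt with rfl | hd
  · simp_all
  have hne : ∀ x, (convexCombValues h x).Nonempty := fun x => ⟨h x, self_mem_convexCombValues h x⟩
  calc convEnv h (c • x + d • y)
      ≤ sInf (c • convexCombValues h x + d • convexCombValues h y) :=
        csInf_le_csInf (bddBelow_convexCombValues hlb _)
          (((hne x).smul_set).add (hne y).smul_set)
          (smul_add_smul_subset_convexCombValues hc hd hcd x y)
    _ = c • convEnv h x + d • convEnv h y := by
        rw [csInf_add ((hne x).smul_set) ((bddBelow_convexCombValues hlb x).smul_of_nonneg hc.le)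
          ((hne y).smul_set) ((bddBelow_convexCombValues hlb y).smul_of_nonneg hd.le),
          Real.sInf_smul_of_nonneg hc.le, Real.sInf_smul_of_nonneg hd.le]
        rfl

/-- Translate all the points of a convex combination by `±t`. -/
lemma semiconcaveWith_convEnv {C a : ℝ} (hsc : SemiconcaveWith C a h)
    (hlb : ∀ z, b + φ z ≤ h z) : SemiconcaveWith C a (convEnv h) := fun x t => by
  have key : ∀ r ∈ convexCombValues h x,
      (convEnv h (x + t) + convEnv h (x - t) - C * ‖t‖ ^ (1 + a)) / 2 ≤ r := by
    rintro r ⟨m, l, z, hl, hs, hz, rfl⟩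
    have h₁ := convEnv_le_of_mem hlb (sum_mul_add_mem_convexCombValues hl hs hz t)
    have h₂ := convEnv_le_of_mem hlb (sum_mul_add_mem_convexCombValues hl hs hz (-t))
    rw [← sub_eq_add_neg] at h₂
    have hsum : ∑ i, l i * (h (z i + t) + h (z i + -t)) ≤
        ∑ i, l i * (2 * h (z i) + C * ‖t‖ ^ (1 + a)) :=
      Finset.sum_le_sum fun i _ => mul_le_mul_of_nonneg_left
        (by rw [← sub_eq_add_neg]; linarith [hsc (z i) t]) (hl i).le
    simp only [mul_add, Finset.sum_add_distrib, ← Finset.sum_mul, hs, one_mul,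
      mul_left_comm _ (2 : ℝ), ← Finset.mul_sum] at hsum
    rw [div_le_iff₀ two_pos]
    linarith
  have := le_csInf ⟨h x, self_mem_convexCombValues h x⟩ key
  rw [← convEnv_eq_sInf] at this
  linarith

end ConvexEnvelope

section RightDirDeriv

variable {X : Type*} [NormedAddCommGroup X] [NormedSpace ℝ X] {u : X → ℝ}

lemma ConvexOn.comp_line (hu : ConvexOn ℝ univ u) (x v : X) :
    ConvexOn ℝ univ (fun s : ℝ => u (x + s • v)) := by
  refine ⟨convex_univ, fun s _ t _ p q hp hq hpq => ?_⟩
  have := hu.2 (mem_univ (x + s • v)) (mem_univ (x + t • v)) hp hq hpq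
  rwa [show p • (x + s • v) + q • (x + t • v) = (p + q) • x + (p • s + q • t) • v by module,
    hpq, one_smul] at this

noncomputable def rightDirDeriv (u : X → ℝ) (x v : X) : ℝ :=
  derivWithin (fun s : ℝ => u (x + s • v)) (Ioi 0) 0

lemma ConvexOn.hasDerivWithinAt_rightDirDeriv (hu : ConvexOn ℝ univ u) (x v : X) :
    HasDerivWithinAt (fun s : ℝ => u (x + s • v)) (rightDirDeriv u x v) (Ioi 0) 0 :=
  (hu.comp_line x v).hasDerivWithinAt_rightDeriv_of_mem_interior (by simp)

lemma ConvexOn.tendsto_slope_rightDirDeriv (hu : ConvexOn ℝ univ u) (x v : X) :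
    Tendsto (fun s : ℝ => (u (x + s • v) - u x) / s) (𝓝[>] 0) (𝓝 (rightDirDeriv u x v)) := by
  have := (hasDerivWithinAt_iff_tendsto_slope' self_notMem_Ioi).1
    (hu.hasDerivWithinAt_rightDirDeriv x v)
  simpa [slope_fun_def_field] using this

lemma ConvexOn.rightDirDeriv_le (hu : ConvexOn ℝ univ u) (x v : X) :
    rightDirDeriv u x v ≤ u (x + v) - u x := by
  simpa [slope_def_field] using (hu.comp_line x v).le_slope_of_hasDerivWithinAt_Ioi
    (mem_univ 0) (mem_univ 1) one_pos (hu.hasDerivWithinAt_rightDirDeriv x v)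

lemma ConvexOn.rightDirDeriv_smul (hu : ConvexOn ℝ univ u) (x v : X) {c : ℝ} (hc : 0 < c) :
    rightDirDeriv u x (c • v) = c * rightDirDeriv u x v := by
  have hmul : HasDerivWithinAt (fun s : ℝ => c * s) c (Ioi 0) 0 := by
    simpa using (hasDerivWithinAt_id (0 : ℝ) (Ioi 0)).const_mul c
  have := (hu.hasDerivWithinAt_rightDirDeriv x v).comp_of_eq 0 hmul
    (fun s hs => mul_pos hc hs) (by simp)
  have hfun : (fun s : ℝ => u (x + s • c • v)) = (fun s => u (x + s • v)) ∘ (fun s => c * s) := by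
    ext s
    simp [smul_smul, mul_comm]
  rw [rightDirDeriv, hfun, this.derivWithin (uniqueDiffWithinAt_Ioi 0), mul_comm]

lemma ConvexOn.rightDirDeriv_add_le (hu : ConvexOn ℝ univ u) (x v w : X) :
    rightDirDeriv u x (v + w) ≤ rightDirDeriv u x v + rightDirDeriv u x w := by
  have hmid : rightDirDeriv u x ((1 / 2 : ℝ) • (v + w)) ≤
      (rightDirDeriv u x v + rightDirDeriv u x w) / 2 := by
    refine le_of_tendsto_of_tendsto (hu.tendsto_slope_rightDirDeriv x _)
      (((hu.tendsto_slope_rightDirDeriv x v).add (hu.tendsto_slope_rightDirDeriv x w)).div_const 2)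
      (eventually_nhdsWithin_of_forall fun s hs => ?_)
    have := hu.2 (mem_univ (x + s • v)) (mem_univ (x + s • w))
      (by norm_num : (0 : ℝ) ≤ 1 / 2) (by norm_num : (0 : ℝ) ≤ 1 / 2) (by norm_num)
    rw [show (1 / 2 : ℝ) • (x + s • v) + (1 / 2 : ℝ) • (x + s • w) =
      x + s • (1 / 2 : ℝ) • (v + w) by module, smul_eq_mul, smul_eq_mul] at this
    dsimp only
    rw [← add_div, div_div, mul_comm, ← div_div, div_le_div_iff_of_pos_right hs]
    linarith
  rw [hu.rightDirDeriv_smul x _ (by norm_num)] at hmid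
  linarith

end RightDirDeriv

section Regularity

variable {X : Type*} [NormedAddCommGroup X] [NormedSpace ℝ X] {u : X → ℝ}

/-- Hahn–Banach below the sublinear functional `rightDirDeriv u x`. -/
lemma ConvexOn.exists_subgradient_s15 (hu : ConvexOn ℝ univ u) (x : X) {M : ℝ}
    (hM : ∀ v, ‖v‖ = 1 → u (x + v) ≤ u x + M) :
    ∃ ℓ : X →L[ℝ] ℝ, ∀ t, u x + ℓ t ≤ u (x + t) := by
  obtain ⟨g, -, hg⟩ := exists_extension_of_le_sublinear ⊥ (rightDirDeriv u x)
    (fun c hc v => hu.rightDirDeriv_smul x v hc) (hu.rightDirDeriv_add_le x) (by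
      rintro ⟨v, hv⟩
      obtain rfl : v = 0 := (Submodule.mem_bot ℝ).1 hv
      exact (⊥ : X →ₗ.[ℝ] ℝ).map_zero.trans_le (by simp [rightDirDeriv]))
  have hle : ∀ t, g t ≤ u (x + t) - u x := fun t => (hg t).trans (hu.rightDirDeriv_le x t)
  have hbound : ∀ v, ‖g v‖ ≤ M * ‖v‖ := by
    intro v
    rcases eq_or_ne v 0 with rfl | hv
    · simp
    have he : ‖‖v‖⁻¹ • v‖ = 1 := norm_smul_inv_norm hv
    have h₁ := (hle _).trans (sub_le_iff_le_add'.2 (hM _ he))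
    have h₂ := (hle _).trans (sub_le_iff_le_add'.2 (hM _ ((norm_neg _).trans he)))
    have hpos : 0 < ‖v‖ := norm_pos_iff.2 hv
    rw [map_smul, smul_eq_mul, inv_mul_le_iff₀ hpos] at h₁
    rw [map_neg, map_smul, smul_eq_mul, ← mul_neg, inv_mul_le_iff₀ hpos] at h₂
    rw [Real.norm_eq_abs, abs_le]
    constructor <;> linarith
  exact ⟨g.mkContinuous M hbound, fun t => by
    rw [LinearMap.mkContinuous_apply]
    linarith [hle t]⟩

lemma SemiconcaveWith.le_add_of_norm_eq_one {C a b : ℝ} {φ : X →L[ℝ] ℝ}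
    (hsc : SemiconcaveWith C a u) (hlb : ∀ z, b + φ z ≤ u z) (x v : X) (hv : ‖v‖ = 1) :
    u (x + v) ≤ u x + (u x - b - φ x + ‖φ‖ + C) := by
  have h₁ := hsc x v
  have h₂ := hlb (x - v)
  have h₃ := (le_abs_self (φ v)).trans (φ.le_opNorm v)
  rw [hv, Real.one_rpow, mul_one] at h₁
  rw [hv, mul_one] at h₃
  rw [map_sub] at h₂
  linarith

lemma hasFDerivAt_of_abs_sub_le_rpow {ℓ : X →L[ℝ] ℝ} {x : X} {C a : ℝ} (ha : 0 < a)
    (h : ∀ t, |u (x + t) - u x - ℓ t| ≤ C * ‖t‖ ^ (1 + a)) : HasFDerivAt u ℓ x := by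
  have hlim : Tendsto (fun t : X => C * ‖t‖ ^ a) (𝓝 0) (𝓝 0) := by
    have := ((continuous_norm.rpow_const fun _ => Or.inr ha.le).const_mul C).tendsto (0 : X)
    simpa [Real.zero_rpow ha.ne'] using this
  rw [hasFDerivAt_iff_isLittleO_nhds_zero, Asymptotics.isLittleO_iff]
  intro ε hε
  filter_upwards [hlim.eventually (gt_mem_nhds hε)] with t ht
  calc ‖u (x + t) - u x - ℓ t‖ ≤ C * ‖t‖ ^ a * ‖t‖ := by
        rw [Real.norm_eq_abs, mul_assoc, mul_comm (_ ^ a), ← Real.rpow_one_add' (norm_nonneg t)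
          (by linarith)]
        exact h t
    _ ≤ ε * ‖t‖ := by gcongr

/-- Compare the Taylor remainders at `x` and at `y` in a direction of length `‖x - y‖`. -/
lemma norm_sub_le_of_subgradient_of_le (u' : X → X →L[ℝ] ℝ) {C a : ℝ} (hC : 0 ≤ C)
    (ha : 0 < a) (hsub : ∀ x t, u x + u' x t ≤ u (x + t))
    (hup : ∀ x t, u (x + t) ≤ u x + u' x t + C * ‖t‖ ^ (1 + a)) (x y : X) :
    ‖u' x - u' y‖ ≤ 2 ^ (1 + a) * C * ‖x - y‖ ^ a := by
  have hcross : ∀ x y v, u' x v - u' y v ≤ C * (‖x - y‖ + ‖v‖) ^ (1 + a) := by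
    intro x y v
    have h₁ := hsub x v
    have h₂ := hup y (x - y + v)
    have h₃ := hsub y (x - y)
    rw [show y + (x - y + v) = x + v by abel, map_add] at h₂
    rw [add_sub_cancel] at h₃
    have h₄ : C * ‖x - y + v‖ ^ (1 + a) ≤ C * (‖x - y‖ + ‖v‖) ^ (1 + a) := by
      gcongr
      exact norm_add_le _ _
    linarith
  rcases eq_or_ne x y with rfl | hxy
  · simp [Real.zero_rpow ha.ne']
  set r := ‖x - y‖
  have hr : 0 < r := norm_pos_iff.2 (sub_ne_zero.2 hxy)
  refine ContinuousLinearMap.opNorm_le_of_unit_norm (by positivity) fun e he => ?_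
  have hscale : ∀ x y, ‖x - y‖ = r →
      u' x (r • e) - u' y (r • e) ≤ r * (2 ^ (1 + a) * C * r ^ a) := by
    intro x y hxy
    have := hcross x y (r • e)
    rwa [norm_smul, he, Real.norm_of_nonneg hr.le, mul_one, hxy, ← two_mul,
      Real.mul_rpow zero_le_two hr.le, Real.rpow_one_add' hr.le (by linarith),
      show C * (2 ^ (1 + a) * (r * r ^ a)) = r * (2 ^ (1 + a) * C * r ^ a) by ring] at this
  have h₁ := hscale x y rfl
  have h₂ := hscale y x (norm_sub_rev y x)
  simp only [map_smul, smul_eq_mul, ← mul_sub] at h₁ h₂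
  rw [_root_.sub_apply, Real.norm_eq_abs, abs_le]
  constructor <;> nlinarith

theorem SemiconcaveWith.differentiable_of_convexOn {C a b : ℝ} {φ : X →L[ℝ] ℝ}
    (hsc : SemiconcaveWith C a u) (hu : ConvexOn ℝ univ u) (hlb : ∀ z, b + φ z ≤ u z)
    (hC : 0 ≤ C) (ha : 0 < a) :
    Differentiable ℝ u ∧ ∀ x y, ‖fderiv ℝ u x - fderiv ℝ u y‖ ≤ 2 ^ (1 + a) * C * ‖x - y‖ ^ a := by
  choose ℓ hℓ using fun x => hu.exists_subgradient_s15 x (hsc.le_add_of_norm_eq_one hlb x)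
  have hup : ∀ x t, u (x + t) ≤ u x + ℓ x t + C * ‖t‖ ^ (1 + a) := by
    intro x t
    have h₁ := hℓ x (-t)
    have h₂ := hsc x t
    rw [map_neg, ← sub_eq_add_neg x t] at h₁
    linarith
  have hderiv : ∀ x, HasFDerivAt u (ℓ x) x := fun x =>
    hasFDerivAt_of_abs_sub_le_rpow (C := C) ha fun t => abs_le.2
      ⟨by linarith [hℓ x t, mul_nonneg hC (Real.rpow_nonneg (norm_nonneg t) (1 + a))],
        by linarith [hup x t]⟩
  refine ⟨fun x => (hderiv x).differentiableAt, fun x y => ?_⟩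
  rw [(hderiv x).fderiv, (hderiv y).fderiv]
  exact norm_sub_le_of_subgradient_of_le ℓ hC ha hℓ hup x y

end Regularity

section InfConvolution

variable {X : Type*} [NormedAddCommGroup X]

lemma isGLB_infConvK_toReal {K : X → X → ℝ} (hK : ∀ x y, 0 ≤ K x y) {f : X → EReal}
    {m : ℝ} (hm : ∀ y, (m : EReal) ≤ f y) (hproper : ∃ y, f y ≠ ⊤) (n : ℕ) (x : X) :
    IsGLB (range fun y : {y // f y ≠ ⊤} => (f y).toReal + n * K x y)
      (infConvK K f n x).toReal := by
  have hfin : ∀ y : {y // f y ≠ ⊤},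
      f y + (((n : ℝ) * K x y : ℝ) : EReal) = (((f y).toReal + n * K x y : ℝ) : EReal) := by
    rintro ⟨y, hy⟩
    rw [EReal.coe_add, EReal.coe_toReal hy (ne_bot_of_le_ne_bot (EReal.coe_ne_bot m) (hm y))]
  have hge : (m : EReal) ≤ infConvK K f n x := le_iInf fun y =>
    (hm y).trans (le_add_of_nonneg_right (EReal.coe_nonneg.2 (by positivity [hK x y])))
  obtain ⟨y₀, hy₀⟩ := hproper
  have hlt : infConvK K f n x < ⊤ :=
    (iInf_le _ y₀).trans_lt (EReal.add_lt_top hy₀ (EReal.coe_ne_top _))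
  have hcoe : ((infConvK K f n x).toReal : EReal) = infConvK K f n x :=
    EReal.coe_toReal hlt.ne (ne_bot_of_le_ne_bot (EReal.coe_ne_bot m) hge)
  refine ⟨?_, fun b hb => ?_⟩
  · rintro _ ⟨y, rfl⟩
    rw [← EReal.coe_le_coe_iff, hcoe, ← hfin]
    exact iInf_le _ _
  · rw [← EReal.coe_le_coe_iff, hcoe]
    refine le_iInf fun y => ?_
    by_cases hy : f y = ⊤
    · rw [hy, EReal.top_add_coe]
      exact le_top
    · rw [hfin ⟨y, hy⟩, EReal.coe_le_coe_iff]
      exact hb ⟨⟨y, hy⟩, rfl⟩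

lemma le_infConvK_toReal {K : X → X → ℝ} (hK : ∀ x y, 0 ≤ K x y) {f : X → EReal}
    {m : ℝ} (hm : ∀ y, (m : EReal) ≤ f y) (hproper : ∃ y, f y ≠ ⊤) (n : ℕ) (x : X) :
    m ≤ (infConvK K f n x).toReal := by
  refine (isGLB_infConvK_toReal hK hm hproper n x).2 ?_
  rintro _ ⟨y, rfl⟩
  have := EReal.toReal_le_toReal (hm y) (EReal.coe_ne_bot m) y.2
  rw [EReal.toReal_coe] at this
  linarith [mul_nonneg n.cast_nonneg (hK x y)]

lemma semiconcaveWith_infConvK_toReal {K : X → X → ℝ} (hK : ∀ x y, 0 ≤ K x y) {f : X → EReal}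
    {m : ℝ} (hm : ∀ y, (m : EReal) ≤ f y) (hproper : ∃ y, f y ≠ ⊤) {C a : ℝ}
    (hKsc : ∀ y, SemiconcaveWith C a (fun x => K x y)) (n : ℕ) :
    SemiconcaveWith (n * C) a (fun x => (infConvK K f n x).toReal) :=
  SemiconcaveWith.of_isGLB (fun y : {y // f y ≠ ⊤} =>
    ((hKsc y).const_mul n.cast_nonneg).const_add (f y).toReal)
    (isGLB_infConvK_toReal hK hm hproper n)

end InfConvolution

section Kernel

variable {X : Type*} [NormedAddCommGroup X] [NormedSpace ℝ X]

lemma semiconcaveWith_of_eq_sub {K d : X → X → ℝ} {c : X → ℝ} {C a : ℝ}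
    (hK : ∀ x y, K x y = c x - d x y) (hd : ∀ y, ConvexOn ℝ univ (fun x => d x y))
    (hc : SemiconcaveWith C a c) (y : X) : SemiconcaveWith C a (fun x => K x y) := by
  have h := hc.add (hd y).neg.semiconcaveWith_zero
  rwa [add_zero, show c + -(fun x => d x y) = fun x => K x y from
    funext fun x => by simp [hK, sub_eq_add_neg]] at h

lemma convexOn_of_le_of_diag {c : X → ℝ} {d : X → X → ℝ}
    (hd : ∀ y, ConvexOn ℝ univ (fun x => d x y)) (hle : ∀ x y, d x y ≤ c x)
    (hdiag : ∀ x, d x x = c x) : ConvexOn ℝ univ c := by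
  refine ⟨convex_univ, fun x _ y _ p q hp hq hpq => ?_⟩
  rw [← hdiag]
  calc d (p • x + q • y) (p • x + q • y)
      ≤ p • d x (p • x + q • y) + q • d y (p • x + q • y) :=
        (hd _).2 (mem_univ x) (mem_univ y) hp hq hpq
    _ ≤ p • c x + q • c y := by gcongr <;> apply hle

lemma ConvexOn.add_fderiv_le {u : X → ℝ} (hu : ConvexOn ℝ univ u) {x : X}
    (hd : DifferentiableAt ℝ u x) (v : X) : u x + fderiv ℝ u x v ≤ u (x + v) := by
  have hline : HasDerivAt (fun s : ℝ => x + s • v) v 0 := by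
    simpa using ((hasDerivAt_id (0 : ℝ)).smul_const v).const_add x
  have := hd.hasFDerivAt.comp_hasDerivAt_of_eq 0 hline (by simp)
  have := (hu.comp_line x v).le_slope_of_hasDerivAt (mem_univ 0) (mem_univ 1) one_pos this
  simp only [slope_def_field, zero_smul, add_zero, one_smul, sub_zero, div_one] at this
  linarith

lemma affine_le_infConvK_toReal_add {K : X → X → ℝ} (hK : ∀ x y, 0 ≤ K x y) {f : X → EReal}
    {m : ℝ} (hm : ∀ y, (m : EReal) ≤ f y) (hproper : ∃ y, f y ≠ ⊤) {c : X → ℝ}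
    (hc : ConvexOn ℝ univ c) (hd : DifferentiableAt ℝ c 0) (n : ℕ) (z : X) :
    (m + n * c 0) + ((n : ℝ) • fderiv ℝ c 0) z ≤ (infConvK K f n z).toReal + n * c z := by
  have := mul_le_mul_of_nonneg_left (hc.add_fderiv_le hd z) n.cast_nonneg
  rw [zero_add] at this
  rw [smul_apply, smul_eq_mul]
  linarith [le_infConvK_toReal hK hm hproper n z]

end Kernel

lemma norm_fderiv_sub_const_mul_le_of_holder {X : Type*} [NormedAddCommGroup X]
    [NormedSpace ℝ X] {u v : X → ℝ} (hu : Differentiable ℝ u) (hv : Differentiable ℝ v)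
    {A B a : ℝ} (huH : ∀ x y, ‖fderiv ℝ u x - fderiv ℝ u y‖ ≤ A * ‖x - y‖ ^ a)
    (hvH : ∀ x y, ‖fderiv ℝ v x - fderiv ℝ v y‖ ≤ B * ‖x - y‖ ^ a) (c : ℝ) (x y : X) :
    ‖fderiv ℝ (fun z => u z - c * v z) x - fderiv ℝ (fun z => u z - c * v z) y‖ ≤
      (A + |c| * B) * ‖x - y‖ ^ a := by
  have hcv : Differentiable ℝ (fun z => c * v z) := hv.const_mul c
  rw [fderiv_fun_sub (hu x) (hcv x), fderiv_fun_sub (hu y) (hcv y), fderiv_const_mul (hv x),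
    fderiv_const_mul (hv y)]
  calc _ = ‖(fderiv ℝ u x - fderiv ℝ u y) - c • (fderiv ℝ v x - fderiv ℝ v y)‖ := by
        rw [smul_sub]
        abel_nf
    _ ≤ A * ‖x - y‖ ^ a + |c| * (B * ‖x - y‖ ^ a) := by
        refine (norm_sub_le _ _).trans (add_le_add (huH x y) ?_)
        rw [norm_smul, Real.norm_eq_abs]
        exact mul_le_mul_of_nonneg_left (hvH x y) (abs_nonneg c)
    _ = _ := by ring

theorem stmt_15_general {X : Type*} [NormedAddCommGroup X] [NormedSpace ℝ X]
    (K : X → X → ℝ) (cK : X → ℝ) (dK : X → X → ℝ)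
    (hK1 : (∀ x y : X, 0 ≤ K x y) ∧ ∀ x : X, K x x = 0)
    (hK5 : (∀ x y : X, K x y = cK x - dK x y) ∧
      ∀ y : X, LowerSemicontinuous (fun x => dK x y) ∧
        ConvexOn ℝ Set.univ (fun x => dK x y))
    (f : X → EReal)
    (hproper : ∃ x, f x ≠ ⊤)
    (hbdd : ∃ m : ℝ, ∀ x, (m : EReal) ≤ f x)
    (α : ℝ) (hα0 : 0 < α)
    (hcdiff : Differentiable ℝ cK)
    (hchold : ∃ L : ℝ, 0 < L ∧ ∀ x y : X,
      ‖fderiv ℝ cK x - fderiv ℝ cK y‖ ≤ L * ‖x - y‖ ^ α)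
    (n : ℕ) :
    Differentiable ℝ (DeltaK K cK f n) ∧
    ∃ L : ℝ, 0 < L ∧ ∀ x y : X,
      ‖fderiv ℝ (DeltaK K cK f n) x - fderiv ℝ (DeltaK K cK f n) y‖ ≤
        L * ‖x - y‖ ^ α := by
  obtain ⟨L, hL, hcH⟩ := hchold
  obtain ⟨m, hm⟩ := hbdd
  set g : X → ℝ := fun z => (infConvK K f n z).toReal + n * cK z
  have hcK : SemiconcaveWith (2 * L) α cK :=
    semiconcaveWith_of_fderiv_holder hcdiff hL.le hα0.le hcH
  have hg : SemiconcaveWith (n * (2 * L) + n * (2 * L)) α g :=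
    (semiconcaveWith_infConvK_toReal hK1.1 hm hproper
      (semiconcaveWith_of_eq_sub hK5.1 (fun y => (hK5.2 y).2) hcK) n).add
      (hcK.const_mul n.cast_nonneg)
  have hcKconv : ConvexOn ℝ univ cK := convexOn_of_le_of_diag (fun y => (hK5.2 y).2)
    (fun x y => by linarith [hK1.1 x y, hK5.1 x y]) (fun x => by linarith [hK1.2 x, hK5.1 x x])
  have hglb := affine_le_infConvK_toReal_add hK1.1 hm hproper hcKconv (hcdiff 0) n
  obtain ⟨hud, huH⟩ := (semiconcaveWith_convEnv hg hglb).differentiable_of_convexOn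
    (convexOn_convEnv_s15 hglb) (le_convEnv hglb) (by positivity) hα0
  refine ⟨hud.sub (hcdiff.const_mul _),
    2 ^ (1 + α) * (n * (2 * L) + n * (2 * L)) + |(n : ℝ)| * L + L, by positivity, fun x y =>
    (norm_fderiv_sub_const_mul_le_of_holder hud hcdiff huH hcH n x y).trans ?_⟩
  exact mul_le_mul_of_nonneg_right (le_add_of_nonneg_right hL.le) (by positivity)

/-- Let `K` be a kernel satisfying conditions (1)–(5) (with `K(x,y) = c_K(x) − d_K(x,y)`,
where `d_K(·,y)` is lower semicontinuous and convex), and let `f` be proper, lower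
semicontinuous and bounded below. If `c_K` is Fréchet differentiable with `α`-Hölder
continuous derivative on `X` (`0 < α ≤ 1`), then so is each `Δ_{K,n} f`. -/
theorem stmt_15 {X : Type*} [NormedAddCommGroup X] [NormedSpace ℝ X] [CompleteSpace X]
    (K : X → X → ℝ) (cK : X → ℝ) (dK : X → X → ℝ)
    (hK1 : (∀ x y : X, 0 ≤ K x y) ∧ ∀ x : X, K x x = 0)
    (hK2 : ∀ x y : X, K x y = K y x)
    (hK3 : ∀ r M : ℝ, 0 < r → 0 < M → ∃ R : ℝ, ∀ x y : X, ‖x‖ ≤ r → R ≤ ‖y‖ → M ≤ K x y)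
    (hK4 : ∀ s : Set (X × X), Bornology.IsBounded s →
      UniformContinuousOn (fun q : X × X => K q.1 q.2) s)
    (hK5 : (∀ x y : X, K x y = cK x - dK x y) ∧
      ∀ y : X, LowerSemicontinuous (fun x => dK x y) ∧
        ConvexOn ℝ Set.univ (fun x => dK x y))
    (f : X → EReal)
    (hproper : ∃ x, f x ≠ ⊤)
    (hlsc : LowerSemicontinuous f)
    (hbdd : ∃ m : ℝ, ∀ x, (m : EReal) ≤ f x)
    (α : ℝ) (hα0 : 0 < α) (hα1 : α ≤ 1)
    (hcdiff : Differentiable ℝ cK)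
    (hchold : ∃ L : ℝ, 0 < L ∧ ∀ x y : X,
      ‖fderiv ℝ cK x - fderiv ℝ cK y‖ ≤ L * ‖x - y‖ ^ α)
    (n : ℕ) (hn : 0 < n) :
    Differentiable ℝ (DeltaK K cK f n) ∧
    ∃ L : ℝ, 0 < L ∧ ∀ x y : X,
      ‖fderiv ℝ (DeltaK K cK f n) x - fderiv ℝ (DeltaK K cK f n) y‖ ≤
        L * ‖x - y‖ ^ α :=
  stmt_15_general K cK dK hK1 hK5 f hproper hbdd α hα0 hcdiff hchold n
end

section
/- For every p > 1 there exist γ > 0 and η > 1 such that for every real normed space X and all x, y ∈ X with ‖y‖ ≥ η·‖x‖, one has 2^(p−1)‖x‖^p + 2^(p−1)‖y‖^p − ‖x+y‖^p ≥ γ·‖y‖^p. -/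
/-- For every `p > 1` there exist `γ > 0` and `η > 1` such that in every real normed
space `X`, whenever `‖y‖ ≥ η‖x‖`, one has
`2^(p−1)‖x‖^p + 2^(p−1)‖y‖^p − ‖x+y‖^p ≥ γ‖y‖^p`. -/
theorem stmt_17 (p : ℝ) (hp : 1 < p) :
    ∃ γ : ℝ, 0 < γ ∧ ∃ η : ℝ, 1 < η ∧
      ∀ (X : Type) [NormedAddCommGroup X] [NormedSpace ℝ X],
        ∀ x y : X, η * ‖x‖ ≤ ‖y‖ →
          γ * ‖y‖ ^ p ≤ 2 ^ (p - 1) * ‖x‖ ^ p + 2 ^ (p - 1) * ‖y‖ ^ p - ‖x + y‖ ^ p := by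
  have hp0 : 0 < p := lt_trans one_pos hp
  have h2 : (1:ℝ) < 2 ^ (p - 1) := by
    rw [show (1:ℝ) = (2:ℝ) ^ (0:ℝ) by simp]
    exact Real.rpow_lt_rpow_left_iff one_lt_two |>.mpr (by linarith)
  set m : ℝ := (2 ^ (p - 1) + 1) / 2 with hm
  have hm1 : (1:ℝ) < m := by rw [hm]; linarith
  have hm0 : (0:ℝ) ≤ m := by linarith
  have hm2p : m < 2 ^ p := by
    have h22 : (2:ℝ) ^ (p - 1) < 2 ^ p :=
      Real.rpow_lt_rpow_left_iff one_lt_two |>.mpr (by linarith)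
    rw [hm]; linarith
  set c : ℝ := m ^ (1/p) with hc
  have hc1 : (1:ℝ) < c :=
    (Real.one_lt_rpow_iff_of_pos (by linarith)).mpr (Or.inl ⟨hm1, by positivity⟩)
  have hcp : c ^ p = m := by
    rw [hc, one_div, Real.rpow_inv_rpow hm0 (ne_of_gt hp0)]
  have hc2 : c < 2 := by
    have h := Real.rpow_lt_rpow hm0 hm2p (by positivity : (0:ℝ) < 1/p)
    rwa [one_div, Real.rpow_rpow_inv (by norm_num) (ne_of_gt hp0), ← one_div, ← hc] at h
  refine ⟨(2 ^ (p - 1) - 1) / 2, by linarith, 1 / (c - 1), ?_, ?_⟩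
  · rw [lt_div_iff₀ (by linarith)]; linarith
  intro X _ _ x y hxy
  have hy0 : (0:ℝ) ≤ ‖y‖ := norm_nonneg y
  have hcm : (0:ℝ) < c - 1 := by linarith
  have hx : ‖x‖ ≤ (c - 1) * ‖y‖ := by
    rw [div_mul_eq_mul_div, div_le_iff₀ hcm, one_mul] at hxy
    nlinarith
  have hxy2 : ‖x + y‖ ≤ c * ‖y‖ := by
    calc ‖x + y‖ ≤ ‖x‖ + ‖y‖ := norm_add_le x y
    _ ≤ (c - 1) * ‖y‖ + ‖y‖ := by linarith
    _ = c * ‖y‖ := by ring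
  have key : ‖x + y‖ ^ p ≤ m * ‖y‖ ^ p := by
    calc ‖x + y‖ ^ p ≤ (c * ‖y‖) ^ p :=
          Real.rpow_le_rpow (norm_nonneg _) hxy2 (le_of_lt hp0)
     _ = c ^ p * ‖y‖ ^ p := Real.mul_rpow (by linarith) hy0
     _ = m * ‖y‖ ^ p := by rw [hcp]
  have hxp : 0 ≤ 2 ^ (p - 1) * ‖x‖ ^ p := by positivity
  have hyp : 0 ≤ ‖y‖ ^ p := Real.rpow_nonneg hy0 p
  nlinarith
end

section
/- Let X be a uniformly convex real Banach space and let p > 1. Then for every r > 0 and ε > 0 there exists C > 0 such that for all x, y ∈ X with ‖x‖ ≤ r and ‖x − y‖ ≥ ε, one has 2^(p−1)‖x‖^p + 2^(p−1)‖y‖^p − ‖x+y‖^p ≥ C·‖x − y‖^p. -/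
/-!
Write `a = ‖x‖`, `b = ‖y‖` and split the kernel as
`(2^(p-1) (a^p + b^p) - (a + b)^p) + ((a + b)^p - ‖x + y‖^p)`.
If `|a - b| ≥ η (a + b)`, strict convexity of `t ↦ t^p` and compactness of the admissible ratios
`a / (a + b)` make the first term at least `c (a + b)^p ≥ c ‖x - y‖^p`.
Otherwise `b ≤ 3r` and the norms are close, so uniform convexity on the ball of radius `3r` gives
`‖x + y‖ + δ ≤ a + b`; then the second term is at least `δ^p ≥ (δ / 4r)^p ‖x - y‖^p`.
-/

open Real Set

namespace Real

variable {p a b : ℝ}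

lemma rpow_add_eq_two_rpow_sub_one_mul (ha : 0 ≤ a) (hb : 0 ≤ b) :
    (a + b) ^ p = 2 ^ (p - 1) * (2 * ((a + b) / 2) ^ p) := by
  rw [div_rpow (add_nonneg ha hb) zero_le_two, rpow_sub_one two_ne_zero]
  field_simp

lemma rpow_add_le_two_rpow_sub_one_mul (hp : 1 ≤ p) (ha : 0 ≤ a) (hb : 0 ≤ b) :
    (a + b) ^ p ≤ 2 ^ (p - 1) * (a ^ p + b ^ p) := by
  have h := (convexOn_rpow hp).2 ha hb (by norm_num : (0 : ℝ) ≤ 1 / 2)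
    (by norm_num : (0 : ℝ) ≤ 1 / 2) (by norm_num)
  simp only [smul_eq_mul] at h
  rw [rpow_add_eq_two_rpow_sub_one_mul ha hb]
  gcongr
  convert mul_le_mul_of_nonneg_left h zero_le_two using 1 <;> ring_nf

lemma rpow_add_lt_two_rpow_sub_one_mul (hp : 1 < p) (ha : 0 ≤ a) (hb : 0 ≤ b) (hab : a ≠ b) :
    (a + b) ^ p < 2 ^ (p - 1) * (a ^ p + b ^ p) := by
  have h := (strictConvexOn_rpow hp).2 ha hb hab (by norm_num : (0 : ℝ) < 1 / 2)
    (by norm_num : (0 : ℝ) < 1 / 2) (by norm_num)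
  simp only [smul_eq_mul] at h
  rw [rpow_add_eq_two_rpow_sub_one_mul ha hb]
  gcongr
  convert mul_lt_mul_of_pos_left h zero_lt_two using 1 <;> ring_nf

lemma two_rpow_sub_one_mul_rpow_add_rpow_eq (ha : 0 ≤ a) (hb : 0 ≤ b) (hab : 0 < a + b) :
    2 ^ (p - 1) * (a ^ p + b ^ p) =
      (a + b) ^ p * (2 ^ (p - 1) * ((a / (a + b)) ^ p + (1 - a / (a + b)) ^ p)) := by
  have hb' : 1 - a / (a + b) = b / (a + b) := by field_simp; ring
  rw [hb', div_rpow ha hab.le, div_rpow hb hab.le]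
  field_simp

lemma exists_one_add_mul_rpow_add_le (hp : 1 < p) {η : ℝ} (hη : 0 < η) (hη1 : η ≤ 1) :
    ∃ c > 0, ∀ a b : ℝ, 0 ≤ a → 0 ≤ b → η * (a + b) ≤ |a - b| →
      (1 + c) * (a + b) ^ p ≤ 2 ^ (p - 1) * (a ^ p + b ^ p) := by
  set g : ℝ → ℝ := fun l ↦ 2 ^ (p - 1) * (l ^ p + (1 - l) ^ p)
  set S : Set ℝ := Icc 0 1 ∩ {l | η ≤ |2 * l - 1|}
  have hS : IsCompact S := isCompact_Icc.inter_right <| isClosed_le continuous_const (by fun_prop)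
  have hg : ContinuousOn g S := by
    refine continuousOn_const.mul (ContinuousOn.add ?_ ?_) <;>
      exact ContinuousOn.rpow_const (by fun_prop) fun _ _ ↦ Or.inr (by linarith)
  obtain ⟨l₀, ⟨⟨hl₀, hl₁⟩, hηl₀ : η ≤ |2 * l₀ - 1|⟩, hmin⟩ :=
    hS.exists_isMinOn ⟨0, ⟨le_rfl, zero_le_one⟩, by norm_num [hη1]⟩ hg
  have hgl₀ : 1 < g l₀ := by
    have hne : l₀ ≠ 1 - l₀ := fun h ↦ by
      rw [show 2 * l₀ - 1 = 0 by linarith, abs_zero] at hηl₀; linarith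
    simpa using rpow_add_lt_two_rpow_sub_one_mul hp hl₀ (by linarith) hne
  refine ⟨g l₀ - 1, by linarith, fun a b ha hb hab ↦ ?_⟩
  rcases (add_nonneg ha hb).eq_or_lt with hs | hs
  · obtain rfl : a = 0 := by linarith [abs_nonneg (a - b)]
    obtain rfl : b = 0 := by linarith
    simp [zero_rpow (by linarith : p ≠ 0)]
  have hl : a / (a + b) ∈ S := by
    refine ⟨⟨div_nonneg ha hs.le, div_le_one_of_le₀ (by linarith) hs.le⟩, ?_⟩
    rw [mem_ofPred_eq, show 2 * (a / (a + b)) - 1 = (a - b) / (a + b) by field_simp; ring,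
      abs_div, abs_of_pos hs, le_div_iff₀ hs]
    exact hab
  rw [two_rpow_sub_one_mul_rpow_add_rpow_eq ha hb hs, mul_comm]
  exact mul_le_mul_of_nonneg_left (by linarith [show g l₀ ≤ g _ from hmin hl])
    (rpow_nonneg hs.le p)

end Real

section UniformConvex

variable {E : Type*} [SeminormedAddCommGroup E] [NormedSpace ℝ E] [UniformConvexSpace E]

lemma exists_forall_norm_add_le_two_mul_max_sub {ε R : ℝ} (hε : 0 < ε) (hR : 0 < R) :
    ∃ δ > 0, ∀ x y : E, ‖x‖ ≤ R → ‖y‖ ≤ R → ε ≤ ‖x - y‖ →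
      ‖x + y‖ ≤ 2 * max ‖x‖ ‖y‖ - δ := by
  obtain ⟨δ, hδ, hconv⟩ := exists_forall_closed_ball_dist_add_le_two_sub E (div_pos hε hR)
  refine ⟨δ * (ε / 2), by positivity, fun x y hx hy hxy ↦ ?_⟩
  set M := max ‖x‖ ‖y‖
  have hMε : ε / 2 ≤ M := by
    linarith [norm_sub_le x y, le_max_left ‖x‖ ‖y‖, le_max_right ‖x‖ ‖y‖]
  have hM : 0 < M := by linarith
  have hnorm (z : E) : ‖M⁻¹ • z‖ = ‖z‖ / M := by
    rw [norm_smul_of_nonneg (inv_nonneg.2 hM.le), inv_mul_eq_div]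
  have h := hconv (x := M⁻¹ • x) (y := M⁻¹ • y)
    (by rw [hnorm, div_le_one hM]; exact le_max_left _ _)
    (by rw [hnorm, div_le_one hM]; exact le_max_right _ _)
    (by rw [← smul_sub, hnorm, div_le_div_iff₀ hR hM]; nlinarith [max_le hx hy])
  rw [← smul_add, hnorm, div_le_iff₀ hM] at h
  nlinarith

lemma exists_forall_norm_add_add_le_norm_add_norm {ε R : ℝ} (hε : 0 < ε) (hR : 0 < R) :
    ∃ δ > 0, ∀ x y : E, ‖x‖ ≤ R → ‖y‖ ≤ R → ε ≤ ‖x - y‖ → |‖x‖ - ‖y‖| ≤ δ →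
      ‖x + y‖ + δ ≤ ‖x‖ + ‖y‖ := by
  obtain ⟨δ, hδ, hconv⟩ := exists_forall_norm_add_le_two_mul_max_sub (E := E) hε hR
  refine ⟨δ / 2, by positivity, fun x y hx hy hxy hxy' ↦ ?_⟩
  have := hconv x y hx hy hxy
  cases max_cases ‖x‖ ‖y‖ <;> cases abs_cases (‖x‖ - ‖y‖) <;> linarith

end UniformConvex

section Kernel

variable {E : Type*} [SeminormedAddCommGroup E]

noncomputable def normPowKernel (p : ℝ) (x y : E) : ℝ :=
  2 ^ (p - 1) * ‖x‖ ^ p + 2 ^ (p - 1) * ‖y‖ ^ p - ‖x + y‖ ^ p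

variable {p : ℝ} {x y : E}

lemma mul_rpow_norm_sub_le_normPowKernel (hp : 0 ≤ p) {c : ℝ} (hc : 0 ≤ c)
    (h : (1 + c) * (‖x‖ + ‖y‖) ^ p ≤ 2 ^ (p - 1) * (‖x‖ ^ p + ‖y‖ ^ p)) :
    c * ‖x - y‖ ^ p ≤ normPowKernel p x y := by
  have h₁ := rpow_le_rpow (norm_nonneg _) (norm_add_le x y) hp
  have h₂ := mul_le_mul_of_nonneg_left (rpow_le_rpow (norm_nonneg _) (norm_sub_le x y) hp) hc
  rw [normPowKernel]
  linarith

lemma rpow_le_normPowKernel (hp : 1 ≤ p) {g : ℝ} (hg : 0 ≤ g) (h : ‖x + y‖ + g ≤ ‖x‖ + ‖y‖) :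
    g ^ p ≤ normPowKernel p x y := by
  have h₁ := add_rpow_le_rpow_add (norm_nonneg (x + y)) hg hp
  have h₂ := rpow_le_rpow (by positivity) h (by linarith : 0 ≤ p)
  have h₃ := rpow_add_le_two_rpow_sub_one_mul hp (norm_nonneg x) (norm_nonneg y)
  rw [normPowKernel]
  linarith

lemma div_rpow_mul_rpow_norm_sub_le_normPowKernel (hp : 1 ≤ p) {g R : ℝ} (hg : 0 ≤ g)
    (hR : 0 < R) (hxy : ‖x - y‖ ≤ R) (h : ‖x + y‖ + g ≤ ‖x‖ + ‖y‖) :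
    (g / R) ^ p * ‖x - y‖ ^ p ≤ normPowKernel p x y := by
  rw [← mul_rpow (by positivity) (norm_nonneg _)]
  refine le_trans ?_ (rpow_le_normPowKernel hp hg h)
  gcongr
  rw [div_mul_eq_mul_div, div_le_iff₀ hR]
  exact mul_le_mul_of_nonneg_left hxy hg

end Kernel

theorem stmt_18_general {X : Type*} [NormedAddCommGroup X] [NormedSpace ℝ X]
    (hUC : ∀ ε : ℝ, 0 < ε → ∃ δ : ℝ, 0 < δ ∧
      ∀ x y : X, ‖x‖ = 1 → ‖y‖ = 1 → ε ≤ ‖x - y‖ → ‖x + y‖ / 2 ≤ 1 - δ)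
    (p : ℝ) (hp : 1 < p) :
    ∀ r ε : ℝ, 0 < r → 0 < ε → ∃ C : ℝ, 0 < C ∧
      ∀ x y : X, ‖x‖ ≤ r → ε ≤ ‖x - y‖ →
        C * ‖x - y‖ ^ p ≤ 2 ^ (p - 1) * ‖x‖ ^ p + 2 ^ (p - 1) * ‖y‖ ^ p - ‖x + y‖ ^ p := by
  intro r ε hr hε
  have : UniformConvexSpace X := ⟨fun ε hε ↦
    let ⟨δ, hδ, h⟩ := hUC ε hε
    ⟨2 * δ, by positivity, fun x hx y hy hxy ↦ by linarith [h x y hx hy hxy]⟩⟩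
  obtain ⟨δ, hδ, hconv⟩ := exists_forall_norm_add_add_le_norm_add_norm (E := X) hε
    (by positivity : 0 < 3 * r)
  set η := min (1 / 2) (δ / (4 * r))
  obtain ⟨c, hc, hgap⟩ := exists_one_add_mul_rpow_add_le hp (η := η) (by positivity)
    ((min_le_left _ _).trans (by norm_num))
  refine ⟨min c ((δ / (4 * r)) ^ p), by positivity, fun x y hx hxy ↦ ?_⟩
  change _ ≤ normPowKernel p x y
  by_cases hsep : η * (‖x‖ + ‖y‖) ≤ |‖x‖ - ‖y‖|
  · exact (mul_le_mul_of_nonneg_right (min_le_left _ _) (by positivity)).trans <|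
      mul_rpow_norm_sub_le_normPowKernel (by linarith) hc.le
        (hgap _ _ (norm_nonneg x) (norm_nonneg y) hsep)
  replace hsep := lt_of_not_ge hsep
  have hy : ‖y‖ ≤ 3 * r := by
    nlinarith [min_le_left (1 / 2) (δ / (4 * r)), neg_abs_le (‖x‖ - ‖y‖), norm_nonneg x]
  have hsum : ‖x + y‖ + δ ≤ ‖x‖ + ‖y‖ := by
    refine hconv x y (by linarith) hy hxy (hsep.le.trans ?_)
    calc _ ≤ δ / (4 * r) * (4 * r) := by gcongr; exacts [min_le_right _ _, by linarith]
      _ = δ := by field_simp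
  exact (mul_le_mul_of_nonneg_right (min_le_right _ _) (by positivity)).trans <|
    div_rpow_mul_rpow_norm_sub_le_normPowKernel hp.le hδ.le (by positivity)
      ((norm_sub_le x y).trans (by linarith)) hsum

/-- If the norm of the Banach space `X` is uniformly convex and `p > 1`, then for all
`r, ε > 0` there is `C > 0` such that `‖x‖ ≤ r` and `‖x − y‖ ≥ ε` imply
`2^(p−1)‖x‖^p + 2^(p−1)‖y‖^p − ‖x+y‖^p ≥ C‖x−y‖^p`. -/
theorem stmt_18 {X : Type*} [NormedAddCommGroup X] [NormedSpace ℝ X] [CompleteSpace X]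
    (hUC : ∀ ε : ℝ, 0 < ε → ∃ δ : ℝ, 0 < δ ∧
      ∀ x y : X, ‖x‖ = 1 → ‖y‖ = 1 → ε ≤ ‖x - y‖ → ‖x + y‖ / 2 ≤ 1 - δ)
    (p : ℝ) (hp : 1 < p) :
    ∀ r ε : ℝ, 0 < r → 0 < ε → ∃ C : ℝ, 0 < C ∧
      ∀ x y : X, ‖x‖ ≤ r → ε ≤ ‖x - y‖ →
        C * ‖x - y‖ ^ p ≤ 2 ^ (p - 1) * ‖x‖ ^ p + 2 ^ (p - 1) * ‖y‖ ^ p - ‖x + y‖ ^ p :=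
  stmt_18_general hUC p hp
end
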